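/- arXiv:1512.06940 — 11 statements merged into one kernel-verified Lean document; each statement's English description precedes it below -/
import Mathlib

section
/- Let (X,d) be a compact metric space and F a finite nonempty set of continuous self-maps of X. Then F is super-transitive if and only if for every nonempty open set U ⊆ X and every point x ∈ X there exist a point u ∈ U and a sequence (n_i) of positive integers such that d_H(F^{n_i}(u), {x}) → 0 as i → ∞, where d_H is the Hausdorff metric on nonempty compact subsets of X. (Commutativity of F is not needed.) -/
open Set Filter Metric TopologicalSpace

/-- The image of a set `A` under a relation given by a family `F` of self-maps:
`F(A) = ⋃_{f ∈ F} f(A)`. -/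
def relImage {X : Type*} (F : Set (X → X)) (A : Set X) : Set X :=
  ⋃ f ∈ F, f '' A

/-- `F^n(x)`: the set of values at `x` of all `n`-fold compositions of members of `F`. -/
def relIter {X : Type*} (F : Set (X → X)) (n : ℕ) (x : X) : Set X :=
  (relImage F)^[n] {x}

/-- `F` is super-transitive if for every pair of nonempty open sets `U, V` there exist
`x ∈ U` and `n ≥ 1` with `F^n(x) ⊆ V`. -/
def SuperTransitive {X : Type*} [TopologicalSpace X] (F : Set (X → X)) : Prop :=
  ∀ U V : Set X, IsOpen U → IsOpen V → U.Nonempty → V.Nonempty →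
    ∃ x ∈ U, ∃ n : ℕ, 1 ≤ n ∧ relIter F n x ⊆ V

lemma relIter_succ' {X : Type*} (F : Set (X → X)) (n : ℕ) (x : X) :
    relIter F (n+1) x = relImage F (relIter F n x) := by
  simp [relIter, Function.iterate_succ_apply']

lemma relImage_biUnion {X ι : Type*} (F : Set (X → X)) (s : Set ι) (A : ι → Set X) :
    relImage F (⋃ i ∈ s, A i) = ⋃ i ∈ s, relImage F (A i) := by
  ext y
  simp only [relImage, mem_iUnion, mem_image, exists_prop]
  tauto

lemma relIter_succ {X : Type*} (F : Set (X → X)) (n : ℕ) (x : X) :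
    relIter F (n+1) x = ⋃ f ∈ F, relIter F n (f x) := by
  induction n generalizing x with
  | zero =>
    rw [relIter_succ']
    simp [relIter, relImage]
  | succ n ih =>
    rw [relIter_succ', ih, relImage_biUnion]
    exact iUnion₂_congr fun f hf => (relIter_succ' F n (f x)).symm

lemma relIter_nonempty {X : Type*} {F : Set (X → X)} (hFne : F.Nonempty) (n : ℕ) (x : X) :
    (relIter F n x).Nonempty := by
  induction n generalizing x with
  | zero => exact ⟨x, rfl⟩
  | succ n ih =>
    obtain ⟨f, hf⟩ := hFne
    obtain ⟨y, hy⟩ := ih (f x)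
    exact ⟨y, by rw [relIter_succ]; exact mem_biUnion hf hy⟩

lemma relIter_usc {X : Type*} [TopologicalSpace X] {F : Set (X → X)} (hFfin : F.Finite)
    (hFcont : ∀ f ∈ F, Continuous f) (n : ℕ) :
    ∀ (x : X) (V : Set X), IsOpen V → relIter F n x ⊆ V →
      ∃ W, IsOpen W ∧ x ∈ W ∧ ∀ y ∈ W, relIter F n y ⊆ V := by
  induction n with
  | zero =>
    intro x V hV hsub
    exact ⟨V, hV, hsub rfl, fun y hy z hz => by
      simp only [relIter, Function.iterate_zero, id, mem_singleton_iff] at hz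
      exact hz ▸ hy⟩
  | succ n ih =>
    intro x V hV hsub
    have h : ∀ f ∈ F, ∃ W, IsOpen W ∧ f x ∈ W ∧ ∀ y ∈ W, relIter F n y ⊆ V := by
      intro f hf
      refine ih (f x) V hV fun z hz => hsub ?_
      rw [relIter_succ]
      exact mem_biUnion hf hz
    choose! W hWopen hWmem hWsub using h
    refine ⟨⋂ f ∈ F, f ⁻¹' W f, hFfin.isOpen_biInter fun f hf =>
      (hWopen f hf).preimage (hFcont f hf), mem_iInter₂.mpr fun f hf => hWmem f hf, ?_⟩
    intro y hy
    rw [relIter_succ]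
    exact iUnion₂_subset fun f hf => hWsub f hf (f y) (mem_iInter₂.mp hy f hf)

/-- For a finite nonempty family `F` of continuous self-maps of a compact metric space `X`,
`F` is super-transitive iff for every nonempty open `U ⊆ X` and every `x ∈ X` there exist
`u ∈ U` and a sequence `(n_i)` of positive integers with `d_H(F^{n_i}(u), {x}) → 0`. -/
theorem stmt_0 {X : Type*} [MetricSpace X] [CompactSpace X]
    (F : Set (X → X)) (hFfin : F.Finite) (hFne : F.Nonempty)
    (hFcont : ∀ f ∈ F, Continuous f) :
    SuperTransitive F ↔
      ∀ U : Set X, IsOpen U → U.Nonempty → ∀ x : X,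
        ∃ u ∈ U, ∃ n : ℕ → ℕ, (∀ i, 1 ≤ n i) ∧
          Tendsto (fun i => hausdorffDist (relIter F (n i) u) ({x} : Set X))
            atTop (nhds 0) := by
  constructor
  · intro hST U hU hUne x
    have step : ∀ (U' : Set X), IsOpen U' → U'.Nonempty → ∀ ε : ℝ, 0 < ε →
        ∃ W : Set X, ∃ n : ℕ, IsOpen W ∧ W.Nonempty ∧ closure W ⊆ U' ∧ 1 ≤ n ∧
          ∀ y ∈ closure W, relIter F n y ⊆ ball x ε := by
      intro U' hU' hU'ne ε hε
      obtain ⟨z, hz, n, hn1, hnsub⟩ :=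
        hST U' (ball x ε) hU' isOpen_ball hU'ne ⟨x, mem_ball_self hε⟩
      obtain ⟨O, hOopen, hzO, hO⟩ := relIter_usc hFfin hFcont n z (ball x ε) isOpen_ball hnsub
      obtain ⟨r, hr, hball⟩ := Metric.isOpen_iff.mp (hOopen.inter hU') z ⟨hzO, hz⟩
      have hc : closure (ball z (r/2)) ⊆ O ∩ U' :=
        (closure_ball_subset_closedBall.trans (closedBall_subset_ball (by linarith))).trans hball
      exact ⟨ball z (r/2), n, isOpen_ball, ⟨z, mem_ball_self (by linarith)⟩,
        hc.trans inter_subset_right, hn1, fun y hy => hO y (hc hy).1⟩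
    choose! W nn hWopen hWne hWcl hnn1 hWsub using step
    set ε : ℕ → ℝ := fun i => 1 / ((i : ℝ) + 1) with hεdef
    have hεpos : ∀ i, 0 < ε i := fun i => by positivity
    let s : ℕ → Set X := fun i => Nat.rec U (fun i prev => W prev (ε i)) i
    have hssucc : ∀ i, s (i+1) = W (s i) (ε i) := fun i => rfl
    have hsON : ∀ i, IsOpen (s i) ∧ (s i).Nonempty := by
      intro i
      induction i with
      | zero => exact ⟨hU, hUne⟩
      | succ i ih =>
        rw [hssucc]
        exact ⟨hWopen _ ih.1 ih.2 _ (hεpos i), hWne _ ih.1 ih.2 _ (hεpos i)⟩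
    have hcl : ∀ i, closure (s (i+1)) ⊆ s i := fun i =>
      hWcl _ (hsON i).1 (hsON i).2 _ (hεpos i)
    have hsub : ∀ i, ∀ y ∈ closure (s (i+1)), relIter F (nn (s i) (ε i)) y ⊆ ball x (ε i) :=
      fun i => hWsub _ (hsON i).1 (hsON i).2 _ (hεpos i)
    have hne : (⋂ i, closure (s (i+1))).Nonempty := by
      apply IsCompact.nonempty_iInter_of_sequence_nonempty_isCompact_isClosed
      · exact fun i => (hcl (i+1)).trans subset_closure
      · exact fun i => (hsON (i+1)).2.closure
      · exact isClosed_closure.isCompact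
      · exact fun i => isClosed_closure
    obtain ⟨u, hu⟩ := hne
    have huU : u ∈ U := hcl 0 (mem_iInter.mp hu 0)
    refine ⟨u, huU, fun i => nn (s i) (ε i),
      fun i => hnn1 _ (hsON i).1 (hsON i).2 _ (hεpos i), ?_⟩
    have hb : ∀ i, hausdorffDist (relIter F (nn (s i) (ε i)) u) ({x} : Set X) ≤ ε i := by
      intro i
      have hsubi : relIter F (nn (s i) (ε i)) u ⊆ ball x (ε i) :=
        hsub i u (mem_iInter.mp hu i)
      apply hausdorffDist_le_of_infDist (le_of_lt (hεpos i))
      · intro y hy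
        rw [infDist_singleton]
        exact le_of_lt (mem_ball.mp (hsubi hy))
      · intro y hy
        obtain ⟨z, hz⟩ := relIter_nonempty hFne (nn (s i) (ε i)) u
        simp only [mem_singleton_iff] at hy
        subst hy
        calc infDist y (relIter F (nn (s i) (ε i)) u) ≤ dist y z := infDist_le_dist_of_mem hz
          _ ≤ ε i := by rw [dist_comm]; exact le_of_lt (mem_ball.mp (hsubi hz))
    exact squeeze_zero (fun i => hausdorffDist_nonneg) hb
      tendsto_one_div_add_atTop_nhds_zero_nat
  · intro h U V hU hV hUne hVne
    obtain ⟨x, hx⟩ := hVne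
    obtain ⟨u, huU, n, hn1, htend⟩ := h U hU hUne x
    obtain ⟨ε, hε, hball⟩ := Metric.isOpen_iff.mp hV x hx
    have hev : ∀ᶠ i in atTop,
        hausdorffDist (relIter F (n i) u) ({x} : Set X) < ε :=
      htend.eventually (Filter.Tendsto.eventually_lt_const hε tendsto_id)
    obtain ⟨i, hi⟩ := hev.exists
    refine ⟨u, huU, n i, hn1 i, fun y hy => hball ?_⟩
    have hEne : EMetric.hausdorffEdist (relIter F (n i) u) ({x} : Set X) ≠ ⊤ :=
      hausdorffEdist_ne_top_of_nonempty_of_bounded (relIter_nonempty hFne _ u)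
        (singleton_nonempty x) isBounded_of_compactSpace isBounded_of_compactSpace
    rw [mem_ball]
    calc dist y x = infDist y ({x} : Set X) := (infDist_singleton).symm
      _ ≤ hausdorffDist (relIter F (n i) u) ({x} : Set X) :=
          infDist_le_hausdorffDist_of_mem hy hEne
      _ < ε := hi
end

section
/- Let (X,d) be a compact metric space, F a finite nonempty set of continuous self-maps of X, Ψ a set of nonempty closed subsets of X admissible for F, Δ a topology on Ψ, and β a base for the topology of X such that for every U ∈ β the set U⁺ = {A ∈ Ψ : A ⊆ U} is nonempty and Δ-open. If the induced map F̄ : (Ψ,Δ) → (Ψ,Δ) is topologically transitive, then F is super-transitive. -/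
open Set Filter Metric TopologicalSpace

/-- A self-map `g` of a topological space is topologically transitive if for every pair of
nonempty open sets `𝒰, 𝒱` there is `n ≥ 1` with `g^n(𝒰) ∩ 𝒱 ≠ ∅`. -/
def TopTransitive {Y : Type*} [TopologicalSpace Y] (g : Y → Y) : Prop :=
  ∀ U V : Set Y, IsOpen U → IsOpen V → U.Nonempty → V.Nonempty →
    ∃ n : ℕ, 1 ≤ n ∧ (g^[n] '' U ∩ V).Nonempty

/-! A set `A ∈ Ψ` with `A ⊆ U` whose `n`-th image under `F̄` lies in `V` (such an `A` exists
by transitivity of `F̄` applied to the open sets `U⁺` and `V⁺`) yields super-transitivity: every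
`x ∈ A` has `F^n(x) ⊆ F^n(A) ⊆ V`. Reducing arbitrary open sets to basic ones finishes the
argument. -/

theorem relImage_mono {X : Type*} (F : Set (X → X)) : Monotone (relImage F) :=
  fun _ _ hst => iUnion₂_mono fun f _ => image_mono (f := f) hst

theorem relIter_subset_iterate_relImage {X : Type*} (F : Set (X → X)) (n : ℕ) {x : X}
    {A : Set X} (hx : x ∈ A) : relIter F n x ⊆ (relImage F)^[n] A :=
  (relImage_mono F).iterate n (singleton_subset_iff.2 hx)

theorem SuperTransitive.of_isTopologicalBasis {X : Type*} [TopologicalSpace X]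
    {F : Set (X → X)} {β : Set (Set X)} (hβ : IsTopologicalBasis β)
    (h : ∀ U ∈ β, ∀ V ∈ β, U.Nonempty → V.Nonempty →
      ∃ x ∈ U, ∃ n : ℕ, 1 ≤ n ∧ relIter F n x ⊆ V) :
    SuperTransitive F := by
  intro U V hU hV ⟨u, hu⟩ ⟨v, hv⟩
  obtain ⟨U', hU'β, huU', hU'U⟩ := hβ.exists_subset_of_mem_open hu hU
  obtain ⟨V', hV'β, hvV', hV'V⟩ := hβ.exists_subset_of_mem_open hv hV
  obtain ⟨x, hxU', n, hn, hxV'⟩ := h U' hU'β V' hV'β ⟨u, huU'⟩ ⟨v, hvV'⟩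
  exact ⟨x, hU'U hxU', n, hn, hxV'.trans hV'V⟩

theorem exists_relIter_subset_of_topTransitive {X : Type*} {F : Set (X → X)}
    {Ψ : Set (Set X)} (hΨ : ∀ A ∈ Ψ, A.Nonempty) [TopologicalSpace Ψ] {Fbar : Ψ → Ψ}
    (hFbar : Function.Semiconj Subtype.val Fbar (relImage F)) (htrans : TopTransitive Fbar)
    {U V : Set X} (hU : {A : Ψ | (A : Set X) ⊆ U}.Nonempty ∧ IsOpen {A : Ψ | (A : Set X) ⊆ U})
    (hV : {A : Ψ | (A : Set X) ⊆ V}.Nonempty ∧ IsOpen {A : Ψ | (A : Set X) ⊆ V}) :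
    ∃ x ∈ U, ∃ n : ℕ, 1 ≤ n ∧ relIter F n x ⊆ V := by
  obtain ⟨n, hn, _, ⟨A, hAU, rfl⟩, hAV⟩ := htrans _ _ hU.2 hV.2 hU.1 hV.1
  obtain ⟨x, hxA⟩ := hΨ A A.2
  refine ⟨x, hAU hxA, n, hn, (relIter_subset_iterate_relImage F n hxA).trans ?_⟩
  rwa [← (hFbar.iterate_right n) A]

theorem stmt_3_general {X : Type*} [MetricSpace X]
    (F : Set (X → X))
    (Ψ : Set (Set X)) (hΨ : ∀ A ∈ Ψ, A.Nonempty ∧ IsClosed A)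
    [Δ : TopologicalSpace ↥Ψ]
    (Fbar : ↥Ψ → ↥Ψ) (hFbar : ∀ A : ↥Ψ, (Fbar A : Set X) = relImage F (A : Set X))
    (β : Set (Set X)) (hβ : IsTopologicalBasis β)
    (hplus : ∀ U ∈ β, {A : ↥Ψ | (A : Set X) ⊆ U}.Nonempty ∧
      IsOpen {A : ↥Ψ | (A : Set X) ⊆ U})
    (htrans : TopTransitive Fbar) :
    SuperTransitive F :=
  SuperTransitive.of_isTopologicalBasis hβ fun U hU V hV _ _ =>
    exists_relIter_subset_of_topTransitive (fun A hA => (hΨ A hA).1) hFbar htrans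
      (hplus U hU) (hplus V hV)

/-- If `Ψ` is a family of nonempty closed subsets of `X` admissible for `F`, `Δ` is a topology
on `Ψ`, and `β` is a base of the topology of `X` such that `U⁺` is nonempty and `Δ`-open for
every `U ∈ β`, then topological transitivity of the induced map `F̄ : (Ψ, Δ) → (Ψ, Δ)` implies
super-transitivity of `F`. -/
theorem stmt_3 {X : Type*} [MetricSpace X] [CompactSpace X]
    (F : Set (X → X)) (hFfin : F.Finite) (hFne : F.Nonempty)
    (hFcont : ∀ f ∈ F, Continuous f)
    (Ψ : Set (Set X)) (hΨ : ∀ A ∈ Ψ, A.Nonempty ∧ IsClosed A)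
    (hadm : ∀ A ∈ Ψ, IsClosed (relImage F A) ∧ relImage F A ∈ Ψ)
    [Δ : TopologicalSpace ↥Ψ]
    (Fbar : ↥Ψ → ↥Ψ) (hFbar : ∀ A : ↥Ψ, (Fbar A : Set X) = relImage F (A : Set X))
    (β : Set (Set X)) (hβ : IsTopologicalBasis β)
    (hplus : ∀ U ∈ β, {A : ↥Ψ | (A : Set X) ⊆ U}.Nonempty ∧
      IsOpen {A : ↥Ψ | (A : Set X) ⊆ U})
    (htrans : TopTransitive Fbar) :
    SuperTransitive F :=
  stmt_3_general F Ψ hΨ (Δ := Δ) Fbar hFbar β hβ hplus htrans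
end

section
/- Let (X,d) be a compact metric space, F a finite commutative set of continuous self-maps of X containing two distinct maps, Ψ a set of nonempty closed subsets of X admissible for F, Δ a topology on Ψ, and β a base for the topology of X such that for every U ∈ β the set U⁺ = {A ∈ Ψ : A ⊆ U} is nonempty and Δ-open. Then the induced map F̄ : (Ψ,Δ) → (Ψ,Δ) is not topologically transitive. -/
open Set Filter Metric TopologicalSpace

/-- Let `F` be a finite commutative family of continuous self-maps of a compact metric space
containing two distinct maps, `Ψ` a family of nonempty closed subsets of `X` admissible for
`F`, `Δ` a topology on `Ψ`, and `β` a base of the topology of `X` such that `U⁺` is nonempty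
and `Δ`-open for every `U ∈ β`. Then the induced map `F̄ : (Ψ, Δ) → (Ψ, Δ)` is not
topologically transitive. -/
theorem stmt_4 {X : Type*} [MetricSpace X] [CompactSpace X]
    (F : Set (X → X)) (hFfin : F.Finite)
    (hFcont : ∀ f ∈ F, Continuous f)
    (hFcomm : ∀ f ∈ F, ∀ g ∈ F, f ∘ g = g ∘ f)
    (htwo : ∃ f ∈ F, ∃ g ∈ F, f ≠ g)
    (Ψ : Set (Set X)) (hΨ : ∀ A ∈ Ψ, A.Nonempty ∧ IsClosed A)
    (hadm : ∀ A ∈ Ψ, IsClosed (relImage F A) ∧ relImage F A ∈ Ψ)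
    [Δ : TopologicalSpace ↥Ψ]
    (Fbar : ↥Ψ → ↥Ψ) (hFbar : ∀ A : ↥Ψ, (Fbar A : Set X) = relImage F (A : Set X))
    (β : Set (Set X)) (hβ : IsTopologicalBasis β)
    (hplus : ∀ U ∈ β, {A : ↥Ψ | (A : Set X) ⊆ U}.Nonempty ∧
      IsOpen {A : ↥Ψ | (A : Set X) ⊆ U}) :
    ¬ TopTransitive Fbar := by
  obtain ⟨f, hf, g, hg, hfg⟩ := htwo
  -- a point where f and g differ
  obtain ⟨x₀, hx₀⟩ : ∃ x, f x ≠ g x := by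
    by_contra h
    push_neg at h
    exact hfg (funext h)
  set ε : ℝ := dist (f x₀) (g x₀) / 3 with hε_def
  have hε : 0 < ε := by
    have : 0 < dist (f x₀) (g x₀) := dist_pos.mpr hx₀
    positivity
  -- δ of continuity for both f and g at x₀
  obtain ⟨δ₁, hδ₁, hδ₁'⟩ := Metric.continuous_iff.mp (hFcont f hf) x₀ ε hε
  obtain ⟨δ₂, hδ₂, hδ₂'⟩ := Metric.continuous_iff.mp (hFcont g hg) x₀ ε hε
  set δ := min δ₁ δ₂ with hδ_def
  have hδ : 0 < δ := lt_min hδ₁ hδ₂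
  -- basic open set V with x₀ ∈ V ⊆ ball x₀ δ
  obtain ⟨V, hVβ, hx₀V, hVsub⟩ := hβ.exists_subset_of_mem_open
    (Metric.mem_ball_self hδ) Metric.isOpen_ball
  intro htrans
  obtain ⟨hVne, hVopen⟩ := hplus V hVβ
  obtain ⟨n, hn1, C, ⟨A, hAU, hAC⟩, hCV⟩ :=
    htrans _ _ hVopen hVopen hVne hVne
  -- so A ⊆ V and Fbar^[n] A ⊆ V
  have hAV : (A : Set X) ⊆ V := hAU
  have hFAV : ((Fbar^[n] A : ↥Ψ) : Set X) ⊆ V := by rw [hAC]; exact hCV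
  -- a point of A
  obtain ⟨a, ha⟩ := (hΨ A A.2).1
  -- basic facts: one-step images
  have hmem : ∀ (h : X → X), h ∈ F → ∀ (B : ↥Ψ), ∀ x ∈ (B : Set X),
      h x ∈ ((Fbar B : ↥Ψ) : Set X) := by
    intro h hh B x hx
    rw [hFbar]
    exact Set.mem_biUnion hh ⟨x, hx, rfl⟩
  -- iterated image under f
  have hiter : ∀ (m : ℕ) (B : ↥Ψ), ∀ x ∈ (B : Set X),
      f^[m] x ∈ ((Fbar^[m] B : ↥Ψ) : Set X) := by
    intro m
    induction m with
    | zero => intro B x hx; simpa using hx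
    | succ m ih =>
        intro B x hx
        rw [Function.iterate_succ_apply, Function.iterate_succ_apply]
        exact ih (Fbar B) (f x) (hmem f hf B x hx)
  obtain ⟨m, rfl⟩ : ∃ m, n = m + 1 := ⟨n - 1, (Nat.succ_pred_eq_of_pos hn1).symm⟩
  -- the two witness points
  have hu : f^[m] (g a) ∈ ((Fbar^[m+1] A : ↥Ψ) : Set X) := by
    rw [Function.iterate_succ_apply]
    exact hiter m (Fbar A) (g a) (hmem g hg A a ha)
  have hv : f^[m] (f a) ∈ ((Fbar^[m+1] A : ↥Ψ) : Set X) := by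
    rw [Function.iterate_succ_apply]
    exact hiter m (Fbar A) (f a) (hmem f hf A a ha)
  have hcomm : Function.Commute f g := fun x => congrFun (hFcomm f hf g hg) x
  -- f u = g v
  have key : f (f^[m] (g a)) = g (f^[m] (f a)) := by
    have h1 : g (f^[m] (f a)) = f^[m] (g (f a)) := (hcomm.iterate_left m (f a)).symm
    rw [h1, ← hcomm a, ← Function.iterate_succ_apply' f m (g a),
      Function.iterate_succ_apply]
  -- distances
  have huV : f^[m] (g a) ∈ Metric.ball x₀ δ := hVsub (hFAV hu)
  have hvV : f^[m] (f a) ∈ Metric.ball x₀ δ := hVsub (hFAV hv)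
  have h1 : dist (f (f^[m] (g a))) (f x₀) < ε :=
    hδ₁' _ (lt_of_lt_of_le (Metric.mem_ball.mp huV) (min_le_left _ _))
  have h2 : dist (g (f^[m] (f a))) (g x₀) < ε :=
    hδ₂' _ (lt_of_lt_of_le (Metric.mem_ball.mp hvV) (min_le_right _ _))
  have h3 : dist (f x₀) (g x₀) ≤ dist (f (f^[m] (g a))) (f x₀) +
      dist (g (f^[m] (f a))) (g x₀) := by
    calc dist (f x₀) (g x₀) ≤ dist (f x₀) (f (f^[m] (g a))) +
          dist (f (f^[m] (g a))) (g x₀) := dist_triangle _ _ _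
      _ = dist (f (f^[m] (g a))) (f x₀) + dist (g (f^[m] (f a))) (g x₀) := by
          rw [dist_comm (f x₀), key]
  have : dist (f x₀) (g x₀) < 2 * ε := by linarith
  rw [hε_def] at this
  linarith [dist_pos.mpr hx₀]
end

section
/- Let (X,d) be a compact metric space and F a finite commutative set of continuous self-maps of X containing two distinct maps. Then the induced map F̄ on the hyperspace K(X) of nonempty compact subsets of X, equipped with the Hausdorff metric d_H, is not topologically transitive. -/
open Set Filter Metric TopologicalSpace

/-- Membership step: if `u ∈ B` and `h ∈ F`, then `h u ∈ Fbar B`. -/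
theorem step_mem {X : Type*} [MetricSpace X]
    (F : Set (X → X)) (Fbar : NonemptyCompacts X → NonemptyCompacts X)
    (hFbar : ∀ A : NonemptyCompacts X, (Fbar A : Set X) = relImage F (A : Set X))
    {h : X → X} (hh : h ∈ F) {B : NonemptyCompacts X} {u : X}
    (hu : u ∈ (B : Set X)) : h u ∈ (Fbar B : Set X) := by
  rw [hFbar]
  exact Set.mem_biUnion hh ⟨u, hu, rfl⟩

theorem iter_mem {X : Type*} [MetricSpace X]
    (F : Set (X → X)) (Fbar : NonemptyCompacts X → NonemptyCompacts X)
    (hFbar : ∀ A : NonemptyCompacts X, (Fbar A : Set X) = relImage F (A : Set X))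
    {f : X → X} (hf : f ∈ F) (A : NonemptyCompacts X) {x : X}
    (hx : x ∈ (A : Set X)) (m : ℕ) : f^[m] x ∈ (Fbar^[m] A : Set X) := by
  induction m with
  | zero => simpa using hx
  | succ k ih =>
      rw [Function.iterate_succ_apply', Function.iterate_succ_apply']
      exact step_mem F Fbar hFbar hf ih

/-- For a finite commutative family `F` of continuous self-maps of a compact metric space
containing two distinct maps, the induced map `F̄(A) = ⋃_{f ∈ F} f(A)` on the hyperspace
`K(X)` of nonempty compact subsets of `X`, with the Hausdorff metric, is not topologically
transitive. -/
theorem stmt_5 {X : Type*} [MetricSpace X] [CompactSpace X]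
    (F : Set (X → X)) (hFfin : F.Finite)
    (hFcont : ∀ f ∈ F, Continuous f)
    (hFcomm : ∀ f ∈ F, ∀ g ∈ F, f ∘ g = g ∘ f)
    (htwo : ∃ f ∈ F, ∃ g ∈ F, f ≠ g)
    (Fbar : NonemptyCompacts X → NonemptyCompacts X)
    (hFbar : ∀ A : NonemptyCompacts X, (Fbar A : Set X) = relImage F (A : Set X)) :
    ¬ TopTransitive Fbar := by
  intro hT
  obtain ⟨f, hf, g, hg, hfg⟩ := htwo
  apply hfg
  -- main claim: every b is a common value f y = g y = b
  have main : ∀ b : X, ∃ y : X, f y = b ∧ g y = b := by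
    intro b
    have hbX : Nonempty X := ⟨b⟩
    -- the singleton {b} as a NonemptyCompacts
    set Sb : NonemptyCompacts X := ⟨⟨{b}, isCompact_singleton⟩, ⟨b, rfl⟩⟩ with hSb
    -- approximate claim for every δ > 0
    have approx : ∀ δ : ℝ, 0 < δ → ∃ y : X, dist (f y) b < δ ∧ dist (g y) b < δ := by
      intro δ hδ
      obtain ⟨n, hn1, ⟨C, ⟨A, -, hAC⟩, hC⟩⟩ :=
        hT Set.univ (Metric.ball Sb δ) isOpen_univ Metric.isOpen_ball
          ⟨Sb, trivial⟩ ⟨Sb, Metric.mem_ball_self hδ⟩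
      obtain ⟨m, rfl⟩ : ∃ m, n = m + 1 := ⟨n - 1, (Nat.succ_pred_eq_of_pos hn1).symm⟩
      obtain ⟨x, hx⟩ := A.nonempty
      have hz : f^[m] x ∈ ((Fbar^[m] A : NonemptyCompacts X) : Set X) :=
        iter_mem F Fbar hFbar hf A hx m
      set z := f^[m] x
      have hfz : f z ∈ ((Fbar^[m+1] A : NonemptyCompacts X) : Set X) := by
        rw [Function.iterate_succ_apply']
        exact step_mem F Fbar hFbar hf hz
      have hgz : g z ∈ ((Fbar^[m+1] A : NonemptyCompacts X) : Set X) := by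
        rw [Function.iterate_succ_apply']
        exact step_mem F Fbar hFbar hg hz
      -- distance estimate
      have hdist : dist (Fbar^[m+1] A) Sb < δ := by
        rw [← hAC] at hC
        exact hC
      have hne : EMetric.hausdorffEdist ((Fbar^[m+1] A : NonemptyCompacts X) : Set X)
          ({b} : Set X) ≠ ⊤ :=
        Metric.hausdorffEdist_ne_top_of_nonempty_of_bounded
          (Fbar^[m+1] A).nonempty ⟨b, rfl⟩
          (Fbar^[m+1] A).isCompact.isBounded isCompact_singleton.isBounded
      have key : ∀ w : X, w ∈ ((Fbar^[m+1] A : NonemptyCompacts X) : Set X) →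
          dist w b < δ := by
        intro w hw
        have h1 : Metric.infDist w ({b} : Set X) ≤
            Metric.hausdorffDist ((Fbar^[m+1] A : NonemptyCompacts X) : Set X)
              ({b} : Set X) :=
          Metric.infDist_le_hausdorffDist_of_mem hw hne
        rw [Metric.infDist_singleton] at h1
        have h2 : dist w b ≤ dist (Fbar^[m+1] A) Sb := by
          rw [NonemptyCompacts.dist_eq]; exact h1
        exact lt_of_le_of_lt h2 hdist
      exact ⟨z, key _ hfz, key _ hgz⟩
    -- minimize φ
    have hφc : Continuous fun y => dist (f y) b + dist (g y) b :=
      (((hFcont f hf).dist continuous_const).add ((hFcont g hg).dist continuous_const))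
    obtain ⟨y₀, -, hy₀'⟩ := isCompact_univ.exists_isMinOn ⟨b, Set.mem_univ b⟩
      hφc.continuousOn
    have hy₀ : ∀ y : X, dist (f y₀) b + dist (g y₀) b ≤ dist (f y) b + dist (g y) b :=
      fun y => hy₀' (Set.mem_univ y)
    have h0 : dist (f y₀) b + dist (g y₀) b ≤ 0 := by
      by_contra hpos
      push_neg at hpos
      obtain ⟨y, h1, h2⟩ := approx _ (by linarith : (0:ℝ) < (dist (f y₀) b + dist (g y₀) b) / 2)
      have := hy₀ y
      linarith
    have h1 : dist (f y₀) b = 0 := le_antisymm (by have := dist_nonneg (x := g y₀) (y := b); linarith) dist_nonneg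
    have h2 : dist (g y₀) b = 0 := le_antisymm (by have := dist_nonneg (x := f y₀) (y := b); linarith) dist_nonneg
    exact ⟨y₀, by rwa [dist_eq_zero] at h1, by rwa [dist_eq_zero] at h2⟩
  funext p
  obtain ⟨y, hfy, hgy⟩ := main p
  calc f p = f (g y) := by rw [hgy]
    _ = (f ∘ g) y := rfl
    _ = (g ∘ f) y := by rw [hFcomm f hf g hg]
    _ = g (f y) := rfl
    _ = g p := by rw [hfy]
end

section
/- Let (X,d) be a compact metric space and F a finite commutative set of continuous self-maps of X containing two distinct maps. Then the induced map F̄ on the hyperspace K(X) of nonempty compact subsets of X, equipped with the Hausdorff metric d_H, is neither weakly mixing nor topologically mixing. -/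
open Set Filter Metric TopologicalSpace

/-- A self-map `g` of a topological space is weakly mixing if for all nonempty open sets
`𝒰₁, 𝒰₂, 𝒱₁, 𝒱₂` there is `n ≥ 1` with `g^n(𝒰ᵢ) ∩ 𝒱ᵢ ≠ ∅` for `i = 1, 2`. -/
def WeaklyMixingMap {Y : Type*} [TopologicalSpace Y] (g : Y → Y) : Prop :=
  ∀ U₁ U₂ V₁ V₂ : Set Y, IsOpen U₁ → IsOpen U₂ → IsOpen V₁ → IsOpen V₂ →
    U₁.Nonempty → U₂.Nonempty → V₁.Nonempty → V₂.Nonempty →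
    ∃ n : ℕ, 1 ≤ n ∧ (g^[n] '' U₁ ∩ V₁).Nonempty ∧ (g^[n] '' U₂ ∩ V₂).Nonempty

/-- A self-map `g` of a topological space is topologically mixing if for every pair of
nonempty open sets `𝒰, 𝒱` there is `K ≥ 1` such that `g^n(𝒰) ∩ 𝒱 ≠ ∅` for all `n ≥ K`. -/
def TopMixingMap {Y : Type*} [TopologicalSpace Y] (g : Y → Y) : Prop :=
  ∀ U V : Set Y, IsOpen U → IsOpen V → U.Nonempty → V.Nonempty →
    ∃ K : ℕ, 1 ≤ K ∧ ∀ n ≥ K, (g^[n] '' U ∩ V).Nonempty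

/-- For a finite commutative family `F` of continuous self-maps of a compact metric space
containing two distinct maps, the induced map `F̄(A) = ⋃_{f ∈ F} f(A)` on the hyperspace
`K(X)` of nonempty compact subsets of `X`, with the Hausdorff metric, is neither weakly
mixing nor topologically mixing. -/
theorem stmt_6 {X : Type*} [MetricSpace X] [CompactSpace X]
    (F : Set (X → X)) (hFfin : F.Finite)
    (hFcont : ∀ f ∈ F, Continuous f)
    (hFcomm : ∀ f ∈ F, ∀ g ∈ F, f ∘ g = g ∘ f)
    (htwo : ∃ f ∈ F, ∃ g ∈ F, f ≠ g)
    (Fbar : NonemptyCompacts X → NonemptyCompacts X)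
    (hFbar : ∀ A : NonemptyCompacts X, (Fbar A : Set X) = relImage F (A : Set X)) :
    ¬ WeaklyMixingMap Fbar ∧ ¬ TopMixingMap Fbar := by
  obtain ⟨f, hf, g, hg, hfg⟩ := htwo
  obtain ⟨x₀, hx₀⟩ := Function.ne_iff.mp hfg
  -- the function measuring how close (f y, g y) is to (x₀, x₀)
  set φ : X → ℝ := fun y => max (dist (f y) x₀) (dist (g y) x₀) with hφ
  have hcont : Continuous φ :=
    ((hFcont f hf).dist continuous_const).max ((hFcont g hg).dist continuous_const)
  obtain ⟨y₀, -, hy₀'⟩ :=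
    isCompact_univ.exists_isMinOn ⟨x₀, mem_univ x₀⟩ hcont.continuousOn
  have hy₀ : ∀ y, y ∈ (Set.univ : Set X) → φ y₀ ≤ φ y := isMinOn_iff.mp hy₀'
  set m : ℝ := φ y₀ with hm
  -- `m > 0`: otherwise `f y₀ = g y₀ = x₀`, and commutativity gives `f x₀ = g x₀`.
  have hmpos : 0 < m := by
    rcases lt_or_ge 0 m with h | h
    · exact h
    · exfalso
      have h1 : dist (f y₀) x₀ = 0 :=
        le_antisymm (le_trans (le_max_left _ _) h) dist_nonneg
      have h2 : dist (g y₀) x₀ = 0 :=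
        le_antisymm (le_trans (le_max_right _ _) h) dist_nonneg
      have hf0 : f y₀ = x₀ := by rwa [dist_eq_zero] at h1
      have hg0 : g y₀ = x₀ := by rwa [dist_eq_zero] at h2
      apply hx₀
      have hcomm := hFcomm f hf g hg
      calc f x₀ = f (g y₀) := by rw [hg0]
        _ = (f ∘ g) y₀ := rfl
        _ = (g ∘ f) y₀ := by rw [hcomm]
        _ = g (f y₀) := rfl
        _ = g x₀ := by rw [hf0]
  -- the singleton `{x₀}` as a point of the hyperspace
  set pt : NonemptyCompacts X := ⟨⟨{x₀}, isCompact_singleton⟩, Set.singleton_nonempty x₀⟩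
    with hpt
  have hptcoe : (pt : Set X) = {x₀} := rfl
  -- key fact: no iterate of `Fbar` (with at least one step) can land in `ball pt m`
  have main : ∀ (n : ℕ) (A : NonemptyCompacts X), 1 ≤ n →
      dist (Fbar^[n] A) pt < m → False := by
    intro n A hn hdist
    obtain ⟨k, rfl⟩ : ∃ k, n = k + 1 := ⟨n - 1, by omega⟩
    rw [Function.iterate_succ_apply'] at hdist
    set C : NonemptyCompacts X := Fbar^[k] A with hC
    obtain ⟨y, hy⟩ := C.nonempty
    -- both `f y` and `g y` belong to `Fbar C`
    have hmem : ∀ h : X → X, h ∈ F → h y ∈ (Fbar C : Set X) := by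
      intro h hh
      rw [hFbar C]
      exact Set.mem_iUnion₂.mpr ⟨h, hh, ⟨y, hy, rfl⟩⟩
    have hne_top : EMetric.hausdorffEdist (Fbar C : Set X) ({x₀} : Set X) ≠ ⊤ :=
      Metric.hausdorffEdist_ne_top_of_nonempty_of_bounded (Fbar C).nonempty
        (Set.singleton_nonempty x₀) (Fbar C).isCompact.isBounded Bornology.isBounded_singleton
    have hhd : hausdorffDist (Fbar C : Set X) ({x₀} : Set X) < m := by
      rw [NonemptyCompacts.dist_eq, hptcoe] at hdist
      exact hdist
    have hkey : ∀ h : X → X, h ∈ F → dist (h y) x₀ < m := by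
      intro h hh
      have := Metric.infDist_le_hausdorffDist_of_mem (hmem h hh) hne_top
      rw [Metric.infDist_singleton] at this
      exact lt_of_le_of_lt this hhd
    have : φ y < m := max_lt (hkey f hf) (hkey g hg)
    exact absurd this (not_lt.mpr (hy₀ y (mem_univ y)))
  have hptball : pt ∈ Metric.ball pt m := Metric.mem_ball_self hmpos
  constructor
  · intro hwm
    obtain ⟨n, hn1, ⟨B, ⟨A, -, rfl⟩, hBV⟩, -⟩ :=
      hwm Set.univ Set.univ (Metric.ball pt m) (Metric.ball pt m)
        isOpen_univ isOpen_univ Metric.isOpen_ball Metric.isOpen_ball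
        ⟨pt, mem_univ pt⟩ ⟨pt, mem_univ pt⟩ ⟨pt, hptball⟩ ⟨pt, hptball⟩
    exact main n A hn1 (Metric.mem_ball.mp hBV)
  · intro htm
    obtain ⟨K, hK1, hK⟩ :=
      htm Set.univ (Metric.ball pt m) isOpen_univ Metric.isOpen_ball
        ⟨pt, mem_univ pt⟩ ⟨pt, hptball⟩
    obtain ⟨B, ⟨A, -, rfl⟩, hBV⟩ := hK K le_rfl
    exact main K A hK1 (Metric.mem_ball.mp hBV)
end

section
/- Let (X,d) be a compact metric space and F a finite nonempty set of continuous self-maps of X. Then F is super-topologically mixing if and only if the induced map F̄ on the hyperspace K(X) of nonempty compact subsets of X, equipped with the Hausdorff metric d_H, is topologically mixing. -/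
open Set Filter Metric TopologicalSpace

/-- `F` is super-topologically mixing if for every pair of nonempty open sets `U, V` there
exists `K ≥ 1` such that for every `n ≥ K` there is `x ∈ U` with `F^n(x) ⊆ V`. -/
def SuperTopMixing {X : Type*} [TopologicalSpace X] (F : Set (X → X)) : Prop :=
  ∀ U V : Set X, IsOpen U → IsOpen V → U.Nonempty → V.Nonempty →
    ∃ K : ℕ, 1 ≤ K ∧ ∀ n ≥ K, ∃ x ∈ U, relIter F n x ⊆ V

lemma relIter_decomp {X : Type*} (F : Set (X → X)) (n : ℕ) (S : Set X) :
    (relImage F)^[n] S = ⋃ x ∈ S, relIter F n x := by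
  induction n with
  | zero => simp [relIter]
  | succ n ih =>
    rw [Function.iterate_succ_apply', ih]
    have h : ∀ x : X, relIter F (n+1) x = relImage F (relIter F n x) := fun x => by
      simp [relIter, Function.iterate_succ_apply']
    ext y
    simp only [mem_iUnion, h, relImage, mem_image, exists_prop]
    tauto

lemma fbar_iter {X : Type*} [MetricSpace X] [CompactSpace X] {F : Set (X → X)}
    {Fbar : NonemptyCompacts X → NonemptyCompacts X}
    (hFbar : ∀ A : NonemptyCompacts X, (Fbar A : Set X) = relImage F (A : Set X))
    (n : ℕ) (A : NonemptyCompacts X) :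
    ((Fbar^[n] A : NonemptyCompacts X) : Set X) = (relImage F)^[n] (A : Set X) := by
  induction n with
  | zero => simp
  | succ n ih =>
    rw [Function.iterate_succ_apply', Function.iterate_succ_apply', hFbar, ih]

/-- A finite nonempty family `F` of continuous self-maps of a compact metric space is
super-topologically mixing iff the induced map `F̄(A) = ⋃_{f ∈ F} f(A)` on the hyperspace
`K(X)` of nonempty compact subsets of `X`, with the Hausdorff metric, is topologically
mixing. -/
theorem stmt_8 {X : Type*} [MetricSpace X] [CompactSpace X]
    (F : Set (X → X)) (hFfin : F.Finite) (hFne : F.Nonempty)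
    (hFcont : ∀ f ∈ F, Continuous f)
    (Fbar : NonemptyCompacts X → NonemptyCompacts X)
    (hFbar : ∀ A : NonemptyCompacts X, (Fbar A : Set X) = relImage F (A : Set X)) :
    SuperTopMixing F ↔ TopMixingMap Fbar := by
  constructor
  · -- forward
    intro hmix 𝒰 𝒱 h𝒰 h𝒱 ⟨A, hA⟩ ⟨B, hB⟩
    have : Nonempty X := ⟨A.nonempty.choose⟩
    obtain ⟨εA, hεA, hball𝒰⟩ := Metric.isOpen_iff.1 h𝒰 A hA
    obtain ⟨εB, hεB, hball𝒱⟩ := Metric.isOpen_iff.1 h𝒱 B hB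
    obtain ⟨tA, htAA, htAfin, htAcov⟩ := A.isCompact.finite_cover_balls (by linarith : (0:ℝ) < εA/3)
    obtain ⟨tB, htBB, htBfin, htBcov⟩ := B.isCompact.finite_cover_balls (by linarith : (0:ℝ) < εB/3)
    have htAne : tA.Nonempty := by
      obtain ⟨a0, ha0⟩ := A.nonempty
      obtain ⟨a, ha, _⟩ := mem_iUnion₂.1 (htAcov ha0)
      exact ⟨a, ha⟩
    have htBne : tB.Nonempty := by
      obtain ⟨b0, hb0⟩ := B.nonempty
      obtain ⟨b, hb, _⟩ := mem_iUnion₂.1 (htBcov hb0)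
      exact ⟨b, hb⟩
    -- choose K for each pair
    have hk : ∀ a b : X, ∃ K : ℕ, a ∈ tA → b ∈ tB →
        ∀ n ≥ K, ∃ x ∈ ball a (εA/3), relIter F n x ⊆ ball b (εB/3) := by
      intro a b
      by_cases ha : a ∈ tA
      · by_cases hb : b ∈ tB
        · obtain ⟨K, _, hK⟩ := hmix (ball a (εA/3)) (ball b (εB/3)) isOpen_ball isOpen_ball
            (nonempty_ball.2 (by linarith)) (nonempty_ball.2 (by linarith))
          exact ⟨K, fun _ _ => hK⟩
        · exact ⟨0, fun _ hb' => absurd hb' hb⟩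
      · exact ⟨0, fun ha' _ => absurd ha' ha⟩
    choose k hkspec using hk
    set K : ℕ := max 1 ((htAfin.toFinset ×ˢ htBfin.toFinset).sup fun p => k p.1 p.2) with hKdef
    refine ⟨K, le_max_left _ _, ?_⟩
    intro n hn
    have hx : ∀ a b : X, ∃ x : X, a ∈ tA → b ∈ tB →
        x ∈ ball a (εA/3) ∧ relIter F n x ⊆ ball b (εB/3) := by
      intro a b
      by_cases ha : a ∈ tA
      · by_cases hb : b ∈ tB
        · have hmem : (a, b) ∈ htAfin.toFinset ×ˢ htBfin.toFinset :=
            Finset.mem_product.2 ⟨htAfin.mem_toFinset.2 ha, htBfin.mem_toFinset.2 hb⟩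
          have hle : k a b ≤ K :=
            le_trans (Finset.le_sup (f := fun p : X × X => k p.1 p.2) hmem) (le_max_right _ _)
          obtain ⟨x, hx1, hx2⟩ := hkspec a b ha hb n (le_trans hle hn)
          exact ⟨x, fun _ _ => ⟨hx1, hx2⟩⟩
        · exact ⟨Classical.arbitrary X, fun _ hb' => absurd hb' hb⟩
      · exact ⟨Classical.arbitrary X, fun ha' _ => absurd ha' ha⟩
    choose x hxspec using hx
    set C : Set X := (fun p : X × X => x p.1 p.2) '' (tA ×ˢ tB) with hCdef
    have hCfin : C.Finite := ((htAfin.prod htBfin).image _)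
    have hCne : C.Nonempty := (htAne.prod htBne).image _
    set CNC : NonemptyCompacts X := ⟨⟨C, hCfin.isCompact⟩, hCne⟩ with hCNC
    have hCA : CNC ∈ 𝒰 := by
      apply hball𝒰
      rw [mem_ball, NonemptyCompacts.dist_eq]
      have : hausdorffDist (CNC : Set X) (A : Set X) ≤ 2*εA/3 := by
        apply hausdorffDist_le_of_mem_dist (by linarith)
        · rintro c ⟨⟨a, b⟩, hab, rfl⟩
          obtain ⟨ha, hb⟩ := mem_prod.1 hab
          exact ⟨a, htAA ha, by
            have := (hxspec a b ha hb).1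
            rw [mem_ball] at this
            linarith⟩
        · intro a' ha'
          obtain ⟨a, ha, ha'a⟩ := mem_iUnion₂.1 (htAcov ha')
          obtain ⟨b, hb⟩ := htBne
          refine ⟨x a b, ⟨(a, b), mem_prod.2 ⟨ha, hb⟩, rfl⟩, ?_⟩
          have h1 := (hxspec a b ha hb).1
          rw [mem_ball] at h1 ha'a
          calc dist a' (x a b) ≤ dist a' a + dist a (x a b) := dist_triangle _ _ _
            _ ≤ εA/3 + εA/3 := by rw [dist_comm a (x a b)]; linarith
            _ ≤ 2*εA/3 := by linarith
      linarith
    have hFC : ((Fbar^[n] CNC : NonemptyCompacts X) : Set X) = ⋃ c ∈ C, relIter F n c := by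
      rw [fbar_iter hFbar, relIter_decomp]
      rfl
    have hCB : Fbar^[n] CNC ∈ 𝒱 := by
      apply hball𝒱
      rw [mem_ball, NonemptyCompacts.dist_eq]
      have : hausdorffDist ((Fbar^[n] CNC : NonemptyCompacts X) : Set X) (B : Set X) ≤ 2*εB/3 := by
        apply hausdorffDist_le_of_mem_dist (by linarith)
        · intro y hy
          rw [hFC] at hy
          obtain ⟨c, hc, hyc⟩ := mem_iUnion₂.1 hy
          obtain ⟨⟨a, b⟩, hab, rfl⟩ := hc
          obtain ⟨ha, hb⟩ := mem_prod.1 hab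
          have h2 := (hxspec a b ha hb).2 hyc
          rw [mem_ball] at h2
          exact ⟨b, htBB hb, by linarith⟩
        · intro b' hb'
          obtain ⟨b, hb, hb'b⟩ := mem_iUnion₂.1 (htBcov hb')
          obtain ⟨a, ha⟩ := htAne
          obtain ⟨y, hy⟩ := relIter_nonempty hFne n (x a b)
          refine ⟨y, ?_, ?_⟩
          · rw [hFC]
            exact mem_biUnion ⟨(a, b), mem_prod.2 ⟨ha, hb⟩, rfl⟩ hy
          · have h2 := (hxspec a b ha hb).2 hy
            rw [mem_ball] at h2 hb'b
            calc dist b' y ≤ dist b' b + dist b y := dist_triangle _ _ _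
              _ ≤ εB/3 + εB/3 := by rw [dist_comm b y]; linarith
              _ ≤ 2*εB/3 := by linarith
      linarith
    exact ⟨Fbar^[n] CNC, ⟨CNC, hCA, rfl⟩, hCB⟩
  · -- backward
    intro hmix U V hU hV ⟨u, hu⟩ ⟨v, hv⟩
    set 𝒰 : Set (NonemptyCompacts X) := {A | (A : Set X) ⊆ U} with h𝒰def
    set 𝒱 : Set (NonemptyCompacts X) := {A | (A : Set X) ⊆ V} with h𝒱def
    have hopen : ∀ (W : Set X), IsOpen W → IsOpen {A : NonemptyCompacts X | (A : Set X) ⊆ W} := by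
      intro W hW
      rw [Metric.isOpen_iff]
      intro A hA
      obtain ⟨δ, hδ, hthick⟩ := A.isCompact.exists_thickening_subset_open hW hA
      refine ⟨δ, hδ, fun C hC => ?_⟩
      rw [mem_ball, NonemptyCompacts.dist_eq] at hC
      intro y hy
      apply hthick
      rw [mem_thickening_iff_infDist_lt A.nonempty]
      calc infDist y (A : Set X) ≤ hausdorffDist (C : Set X) (A : Set X) :=
            infDist_le_hausdorffDist_of_mem hy
              (hausdorffEdist_ne_top_of_nonempty_of_bounded C.nonempty A.nonempty
                C.isCompact.isBounded A.isCompact.isBounded)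
        _ < δ := hC
    obtain ⟨K, hK1, hK⟩ := hmix 𝒰 𝒱 (hopen U hU) (hopen V hV)
      ⟨⟨⟨{u}, isCompact_singleton⟩, singleton_nonempty u⟩, by simpa [h𝒰def] using hu⟩
      ⟨⟨⟨{v}, isCompact_singleton⟩, singleton_nonempty v⟩, by simpa [h𝒱def] using hv⟩
    refine ⟨K, hK1, fun n hn => ?_⟩
    obtain ⟨D, ⟨A, hA𝒰, rfl⟩, hD𝒱⟩ := hK n hn
    obtain ⟨a, ha⟩ := A.nonempty
    refine ⟨a, hA𝒰 ha, ?_⟩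
    have : relIter F n a ⊆ ((Fbar^[n] A : NonemptyCompacts X) : Set X) := by
      rw [fbar_iter hFbar, relIter_decomp]
      exact subset_biUnion_of_mem ha
    exact this.trans hD𝒱
end

section
/- Let (X,d) be a compact metric space and F a finite nonempty commutative set of continuous self-maps of X. If the set of periodic points of the induced map F̄ is dense in the hyperspace K(X) of nonempty compact subsets of X equipped with the Hausdorff metric d_H, then any two members of F are equal, i.e. F is a singleton. -/
open Set Filter Metric TopologicalSpace
open Topology

/-- If the periodic points of the induced map `F̄(A) = ⋃_{f ∈ F} f(A)` are dense in the
hyperspace `K(X)` of nonempty compact subsets of a compact metric space `X` (with the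
Hausdorff metric), where `F` is a finite nonempty commutative family of continuous
self-maps of `X`, then any two members of `F` are equal, i.e. `F` is a singleton. -/
theorem stmt_9 {X : Type*} [MetricSpace X] [CompactSpace X]
    (F : Set (X → X)) (hFfin : F.Finite) (hFne : F.Nonempty)
    (hFcont : ∀ f ∈ F, Continuous f)
    (hFcomm : ∀ f ∈ F, ∀ g ∈ F, f ∘ g = g ∘ f)
    (Fbar : NonemptyCompacts X → NonemptyCompacts X)
    (hFbar : ∀ A : NonemptyCompacts X, (Fbar A : Set X) = relImage F (A : Set X))
    (hdense : Dense {A : NonemptyCompacts X | ∃ n : ℕ, 1 ≤ n ∧ Fbar^[n] A = A}) :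
    ∀ f ∈ F, ∀ g ∈ F, f = g := by
  intro f hf g hg
  -- Key step: every `y` has a common preimage `c` with `f c = g c = y`.
  have key : ∀ y : X, ∃ c : X, f c = y ∧ g c = y := by
    intro y
    have H : ∀ k : ℕ, ∃ b : X,
        dist (f b) y < 1 / (k + 1) ∧ dist (g b) y < 1 / (k + 1) := by
      intro k
      set δ : ℝ := 1 / (k + 1) with hδdef
      have hδ : (0 : ℝ) < δ := by positivity
      set S : NonemptyCompacts X :=
        ⟨⟨{y}, isCompact_singleton⟩, Set.singleton_nonempty y⟩ with hS
      obtain ⟨A, hA⟩ := Metric.dense_iff.mp hdense S δ hδ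
      have hAdist : dist A S < δ := Metric.mem_ball.mp hA.1
      obtain ⟨n, hn1, hAper⟩ := hA.2
      -- Every point of `A` is within `δ` of `y`.
      have hsub : ∀ a ∈ (A : Set X), dist a y < δ := by
        intro a ha
        have hfin : EMetric.hausdorffEdist (A : Set X) (S : Set X) ≠ ⊤ :=
          Metric.hausdorffEdist_ne_top_of_nonempty_of_bounded A.nonempty
            (Set.singleton_nonempty y) A.isCompact.isBounded
            isCompact_singleton.isBounded
        have hhd : Metric.hausdorffDist (A : Set X) (S : Set X) < δ := by
          rwa [Metric.NonemptyCompacts.dist_eq] at hAdist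
        obtain ⟨z, hz, hdz⟩ := Metric.exists_dist_lt_of_hausdorffDist_lt ha hhd hfin
        have : z = y := hz
        rwa [this] at hdz
      -- `B := F̄^[n-1] A` satisfies `F̄ B = A`.
      set B : NonemptyCompacts X := Fbar^[n - 1] A with hB
      have hFB : Fbar B = A := by
        have hsucc : n - 1 + 1 = n := Nat.succ_pred_eq_of_pos hn1
        rw [← hsucc, Function.iterate_succ_apply'] at hAper
        exact hAper
      obtain ⟨b, hb⟩ := B.nonempty
      have hmem : ∀ h : X → X, h ∈ F → h b ∈ (A : Set X) := by
        intro h hh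
        have : h b ∈ relImage F (B : Set X) :=
          Set.mem_biUnion hh (Set.mem_image_of_mem h hb)
        rw [← hFbar B, hFB] at this
        exact this
      exact ⟨b, hsub _ (hmem f hf), hsub _ (hmem g hg)⟩
    choose b hb1 hb2 using H
    obtain ⟨c, φ, hφ, hconv⟩ := CompactSpace.tendsto_subseq b
    have hzero : Tendsto (fun k : ℕ => (1 : ℝ) / (φ k + 1)) atTop (𝓝 0) :=
      (tendsto_one_div_add_atTop_nhds_zero_nat).comp hφ.tendsto_atTop
    have hf' : Tendsto (fun k => f (b (φ k))) atTop (𝓝 y) := by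
      rw [tendsto_iff_dist_tendsto_zero]
      exact squeeze_zero (fun k => dist_nonneg)
        (fun k => le_of_lt (hb1 (φ k))) hzero
    have hg' : Tendsto (fun k => g (b (φ k))) atTop (𝓝 y) := by
      rw [tendsto_iff_dist_tendsto_zero]
      exact squeeze_zero (fun k => dist_nonneg)
        (fun k => le_of_lt (hb2 (φ k))) hzero
    have hfc : Tendsto (fun k => f (b (φ k))) atTop (𝓝 (f c)) :=
      ((hFcont f hf).tendsto c).comp hconv
    have hgc : Tendsto (fun k => g (b (φ k))) atTop (𝓝 (g c)) :=
      ((hFcont g hg).tendsto c).comp hconv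
    exact ⟨c, tendsto_nhds_unique hfc hf', tendsto_nhds_unique hgc hg'⟩
  -- Conclusion via commutativity.
  funext y
  obtain ⟨c, hfc, hgc⟩ := key y
  calc f y = f (g c) := by rw [hgc]
    _ = (f ∘ g) c := rfl
    _ = (g ∘ f) c := by rw [hFcomm f hf g hg]
    _ = g (f c) := rfl
    _ = g y := by rw [hfc]
end

section
/- Let (X,d) be a compact metric space, F a finite commutative set of continuous self-maps of X containing two distinct maps, Ψ a set of nonempty closed subsets of X admissible for F, and Δ a topology on Ψ such that for every nonempty open U ⊆ X the set U⁺ = {A ∈ Ψ : A ⊆ U} is nonempty and Δ-open. Then the set of periodic points of the induced map F̄ is not dense in (Ψ,Δ). -/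
open Set Filter Metric TopologicalSpace

/-- Let `F` be a finite commutative family of continuous self-maps of a compact metric space
containing two distinct maps, `Ψ` a family of nonempty closed subsets of `X` admissible for
`F`, and `Δ` a topology on `Ψ` such that for every nonempty open `U ⊆ X` the set
`U⁺ = {A ∈ Ψ : A ⊆ U}` is nonempty and `Δ`-open. Then the set of periodic points of the
induced map `F̄` is not dense in `(Ψ, Δ)`. -/
theorem stmt_10 {X : Type*} [MetricSpace X] [CompactSpace X]
    (F : Set (X → X)) (hFfin : F.Finite)
    (hFcont : ∀ f ∈ F, Continuous f)
    (hFcomm : ∀ f ∈ F, ∀ g ∈ F, f ∘ g = g ∘ f)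
    (htwo : ∃ f ∈ F, ∃ g ∈ F, f ≠ g)
    (Ψ : Set (Set X)) (hΨ : ∀ A ∈ Ψ, A.Nonempty ∧ IsClosed A)
    (hadm : ∀ A ∈ Ψ, IsClosed (relImage F A) ∧ relImage F A ∈ Ψ)
    [Δ : TopologicalSpace ↥Ψ]
    (Fbar : ↥Ψ → ↥Ψ) (hFbar : ∀ A : ↥Ψ, (Fbar A : Set X) = relImage F (A : Set X))
    (hplus : ∀ U : Set X, IsOpen U → U.Nonempty →
      {A : ↥Ψ | (A : Set X) ⊆ U}.Nonempty ∧ IsOpen {A : ↥Ψ | (A : Set X) ⊆ U}) :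
    ¬ Dense {A : ↥Ψ | ∃ n : ℕ, 1 ≤ n ∧ Fbar^[n] A = A} := by
  classical
  -- Extract two distinct commuting maps.
  obtain ⟨f, hf, g, hg, hfg⟩ := htwo
  have hfc := hFcont f hf
  have hgc := hFcont g hg
  have hcomm : ∀ x, f (g x) = g (f x) := fun x => congrFun (hFcomm f hf g hg) x
  -- Step 1: there is a nonempty open set U with no point mapping into U under both f and g.
  have hU : ∃ U : Set X, IsOpen U ∧ U.Nonempty ∧ ∀ y, ¬ (f y ∈ U ∧ g y ∈ U) := by
    by_contra hcon
    push_neg at hcon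
    have key : ∀ z : X, ∃ y : X, f y = z ∧ g y = z := by
      intro z
      set C : ℕ → Set X := fun n =>
        {y | dist (f y) z ≤ 1 / (n + 1) ∧ dist (g y) z ≤ 1 / (n + 1)} with hC
      have hCcl : ∀ n, IsClosed (C n) := by
        intro n
        exact (isClosed_le (hfc.dist continuous_const) continuous_const).inter
          (isClosed_le (hgc.dist continuous_const) continuous_const)
      have hCne : ∀ n, (C n).Nonempty := by
        intro n
        have hpos : (0:ℝ) < 1 / (n + 1) := by positivity
        obtain ⟨y, hy1, hy2⟩ := hcon (ball z (1 / (n + 1))) isOpen_ball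
          ⟨z, mem_ball_self hpos⟩
        exact ⟨y, le_of_lt (mem_ball.mp hy1), le_of_lt (mem_ball.mp hy2)⟩
      have hCsub : ∀ n, C (n + 1) ⊆ C n := by
        intro n y hy
        have hle : (1:ℝ) / (n + 1 + 1) ≤ 1 / (n + 1) := by
          apply one_div_le_one_div_of_le (by positivity)
          push_cast; linarith
        exact ⟨hy.1.trans (by push_cast at hle ⊢; linarith),
               hy.2.trans (by push_cast at hle ⊢; linarith)⟩
      obtain ⟨y, hy⟩ := IsCompact.nonempty_iInter_of_sequence_nonempty_isCompact_isClosed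
        C hCsub hCne ((hCcl 0).isCompact) hCcl
      have hy' : ∀ n : ℕ, dist (f y) z ≤ 1 / (n + 1) ∧ dist (g y) z ≤ 1 / (n + 1) := by
        intro n; exact mem_iInter.mp hy n
      have hfz : dist (f y) z ≤ 0 := by
        by_contra h
        push_neg at h
        obtain ⟨n, hn⟩ := exists_nat_one_div_lt h
        exact absurd (hy' n).1 (not_le.mpr hn)
      have hgz : dist (g y) z ≤ 0 := by
        by_contra h
        push_neg at h
        obtain ⟨n, hn⟩ := exists_nat_one_div_lt h
        exact absurd (hy' n).2 (not_le.mpr hn)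
      exact ⟨y, dist_le_zero.mp hfz, dist_le_zero.mp hgz⟩
    -- Using commutativity, deduce f = g, a contradiction.
    apply hfg
    funext z
    obtain ⟨y, hy1, hy2⟩ := key z
    calc f z = f (g y) := by rw [hy2]
      _ = g (f y) := hcomm y
      _ = g z := by rw [hy1]
  obtain ⟨U, hUo, hUne, hUprop⟩ := hU
  -- Words of maps from F stay inside iterates of Fbar.
  have L1 : ∀ h ∈ F, ∀ A : ↥Ψ, h '' (A : Set X) ⊆ (Fbar A : Set X) := by
    intro h hh A
    rw [hFbar]
    exact Set.subset_biUnion_of_mem (u := fun f => f '' (A : Set X)) hh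
  have P : ∀ n : ℕ, ∀ A : ↥Ψ, g^[n] '' (A : Set X) ⊆ (Fbar^[n] A : Set X) := by
    intro n
    induction n with
    | zero => intro A; simp
    | succ n ih =>
      intro A
      have h1 : g^[n + 1] '' (A : Set X) = g^[n] '' (g '' (A : Set X)) := by
        rw [Function.iterate_succ, Set.image_comp]
      rw [h1, Function.iterate_succ_apply]
      exact (Set.image_mono (L1 g hg A)).trans (ih (Fbar A))
  have Q : ∀ n : ℕ, ∀ A : ↥Ψ, f '' (g^[n] '' (A : Set X)) ⊆ (Fbar^[n + 1] A : Set X) := by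
    intro n A
    rw [Function.iterate_succ_apply']
    exact (Set.image_mono (P n A)).trans (L1 f hf (Fbar^[n] A))
  -- Conclude: {A | A ⊆ U} is a nonempty open set containing no periodic point.
  obtain ⟨hOne, hOopen⟩ := hplus U hUo hUne
  intro hD
  obtain ⟨A, hAU, n, hn1, hper⟩ := hD.inter_open_nonempty _ hOopen hOne
  obtain ⟨a, ha⟩ := (hΨ (A : Set X) A.2).1
  obtain ⟨m, rfl⟩ : ∃ m, n = m + 1 := ⟨n - 1, (Nat.succ_pred_eq_of_pos hn1).symm⟩
  have h1 : g (g^[m] a) ∈ (Fbar^[m + 1] A : Set X) := by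
    have : g^[m + 1] a ∈ g^[m + 1] '' (A : Set X) := Set.mem_image_of_mem _ ha
    rw [Function.iterate_succ_apply'] at this
    exact P (m + 1) A this
  have h2 : f (g^[m] a) ∈ (Fbar^[m + 1] A : Set X) := by
    exact Q m A ⟨g^[m] a, Set.mem_image_of_mem _ ha, rfl⟩
  rw [hper] at h1 h2
  exact hUprop (g^[m] a) ⟨hAU h2, hAU h1⟩
end

section
/- Let X = ℝ/ℤ be the circle with its quotient metric, let p, q ∈ ℚ with p − q ∉ ℤ, and let F = {R_p, R_q} where R_a(x) = x + a is the rotation by a. Then every point x ∈ X is a periodic point of the relation F (i.e. x ∈ F^n(x) for some n ≥ 1), but the set of periodic points of the induced map F̄ is not dense in the hyperspace K(X) of nonempty compact subsets of X with the Hausdorff metric d_H. In particular, density of the periodic points of the relation F in X does not imply density of the periodic points of the induced map F̄ in K(X). -/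
open Set Filter Metric TopologicalSpace

/-- On the circle `X = ℝ/ℤ`, for rational rotations `R_p, R_q` with `p - q ∉ ℤ` and
`F = {R_p, R_q}`: every point of `X` is a periodic point of the relation `F`, yet the
periodic points of the induced map `F̄` are not dense in the hyperspace `K(X)` of nonempty
compact subsets of `X` with the Hausdorff metric. In particular, density of periodic points
of the relation `F` does not imply density of periodic points of `F̄`. -/
theorem stmt_11 (p q : ℚ) (hpq : ∀ k : ℤ, p - q ≠ (k : ℚ))
    (F : Set (AddCircle (1 : ℝ) → AddCircle (1 : ℝ)))
    (hF : F = {fun x => x + ((p : ℝ) : AddCircle (1 : ℝ)),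
               fun x => x + ((q : ℝ) : AddCircle (1 : ℝ))})
    (Fbar : NonemptyCompacts (AddCircle (1 : ℝ)) → NonemptyCompacts (AddCircle (1 : ℝ)))
    (hFbar : ∀ A : NonemptyCompacts (AddCircle (1 : ℝ)),
      (Fbar A : Set (AddCircle (1 : ℝ))) = relImage F (A : Set (AddCircle (1 : ℝ)))) :
    (∀ x : AddCircle (1 : ℝ), ∃ n : ℕ, 1 ≤ n ∧ x ∈ relIter F n x) ∧
    ¬ Dense {A : NonemptyCompacts (AddCircle (1 : ℝ)) | ∃ n : ℕ, 1 ≤ n ∧ Fbar^[n] A = A} := by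
  set a : (AddCircle (1 : ℝ)) := ((p : ℝ) : (AddCircle (1 : ℝ))) with ha
  set b : (AddCircle (1 : ℝ)) := ((q : ℝ) : (AddCircle (1 : ℝ))) with hb
  have hfa : (fun x : (AddCircle (1 : ℝ)) => x + a) ∈ F := by rw [hF]; left; rfl
  have hfb : (fun x : (AddCircle (1 : ℝ)) => x + b) ∈ F := by rw [hF]; right; rfl
  -- denominators kill rotations
  have hDa : p.den • a = 0 := by
    rw [ha, ← AddCircle.coe_nsmul, AddCircle.coe_eq_zero_iff]
    refine ⟨p.num, ?_⟩
    rw [zsmul_eq_mul, mul_one, nsmul_eq_mul]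
    rw [mul_comm]
    exact_mod_cast (congrArg (fun r : ℚ => (r : ℝ)) (Rat.mul_den_eq_num p)).symm
  -- Part 1
  have part1 : ∀ x : (AddCircle (1 : ℝ)), ∃ n : ℕ, 1 ≤ n ∧ x ∈ relIter F n x := by
    intro x
    have key : ∀ n : ℕ, x + n • a ∈ relIter F n x := by
      intro n
      induction n with
      | zero => simp [relIter]
      | succ k ih =>
        have : relIter F (k + 1) x = relImage F (relIter F k x) := by
          simp [relIter, Function.iterate_succ_apply']
        rw [this, succ_nsmul, ← add_assoc]
        exact Set.mem_biUnion hfa ⟨x + k • a, ih, rfl⟩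
    refine ⟨p.den, p.pos, ?_⟩
    have := key p.den
    rwa [hDa, add_zero] at this
  refine ⟨part1, ?_⟩
  -- Part 2
  -- the "step" lemma for Fbar
  have step : ∀ (g : (AddCircle (1 : ℝ)) → (AddCircle (1 : ℝ))), g ∈ F → ∀ (B : NonemptyCompacts (AddCircle (1 : ℝ))), ∀ y ∈ (B : Set (AddCircle (1 : ℝ))),
      g y ∈ (Fbar B : Set (AddCircle (1 : ℝ))) := by
    intro g hg B y hy
    rw [hFbar]
    exact Set.mem_biUnion hg ⟨y, hy, rfl⟩
  have L1 : ∀ (k : ℕ) (C : NonemptyCompacts (AddCircle (1 : ℝ))), ∀ x ∈ (C : Set (AddCircle (1 : ℝ))),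
      x + k • a ∈ (Fbar^[k] C : Set (AddCircle (1 : ℝ))) := by
    intro k
    induction k with
    | zero => intro C x hx; simpa using hx
    | succ m ih =>
      intro C x hx
      rw [Function.iterate_succ_apply', succ_nsmul, ← add_assoc]
      exact step _ hfa _ _ (ih C x hx)
  -- r = b - a is nonzero
  set r : (AddCircle (1 : ℝ)) := b - a with hrdef
  have hr : r ≠ 0 := by
    intro h
    rw [hrdef, ha, hb, ← AddCircle.coe_sub, AddCircle.coe_eq_zero_iff] at h
    obtain ⟨k, hk⟩ := h
    rw [zsmul_eq_mul, mul_one] at hk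
    have : (q : ℝ) - (p : ℝ) = ((k : ℚ) : ℝ) := by exact_mod_cast hk.symm
    have hqp : q - p = (k : ℚ) := by exact_mod_cast this
    exact hpq (-k) (by push_cast; linarith)
  set δ : ℝ := dist (0 : (AddCircle (1 : ℝ))) r with hδdef
  have hδ : 0 < δ := dist_pos.mpr (fun h => hr h.symm)
  -- periodic sets are invariant under +r
  have inv : ∀ B : NonemptyCompacts (AddCircle (1 : ℝ)), (∃ n : ℕ, 1 ≤ n ∧ Fbar^[n] B = B) →
      ∀ x ∈ (B : Set (AddCircle (1 : ℝ))), x + r ∈ (B : Set (AddCircle (1 : ℝ))) := by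
    rintro B ⟨n, hn1, hnB⟩ x hx
    obtain ⟨m, rfl⟩ : ∃ m, n = m + 1 := ⟨n - 1, (Nat.succ_pred_eq_of_pos hn1).symm⟩
    set c₁ : (AddCircle (1 : ℝ)) := (m + 1) • a with hc₁
    set c₂ : (AddCircle (1 : ℝ)) := m • a + b with hc₂
    have hmc1 : ∀ y ∈ (B : Set (AddCircle (1 : ℝ))), y + c₁ ∈ (B : Set (AddCircle (1 : ℝ))) := by
      intro y hy
      have := L1 (m + 1) B y hy
      rwa [hnB] at this
    have hmc2 : ∀ y ∈ (B : Set (AddCircle (1 : ℝ))), y + c₂ ∈ (B : Set (AddCircle (1 : ℝ))) := by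
      intro y hy
      have h1 := L1 m B y hy
      have h2 := step _ hfb _ _ h1
      rw [← Function.iterate_succ_apply' Fbar m B] at h2
      rw [hnB] at h2
      rwa [hc₂, ← add_assoc]
    have hiter : ∀ (k : ℕ), ∀ y ∈ (B : Set (AddCircle (1 : ℝ))), y + k • c₁ ∈ (B : Set (AddCircle (1 : ℝ))) := by
      intro k
      induction k with
      | zero => intro y hy; simpa using hy
      | succ j ih =>
        intro y hy
        rw [succ_nsmul, ← add_assoc]
        exact hmc1 _ (ih y hy)
    have hDc1 : p.den • c₁ = 0 := by
      rw [hc₁, smul_comm, hDa, smul_zero]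
    have hneg : (p.den - 1) • c₁ = -c₁ := by
      have h1 : (p.den - 1) • c₁ + c₁ = p.den • c₁ := by
        rw [← succ_nsmul, Nat.sub_add_cancel p.pos]
      rw [hDc1] at h1
      exact eq_neg_of_add_eq_zero_left h1
    have key := hiter (p.den - 1) (x + c₂) (hmc2 x hx)
    rw [hneg] at key
    have : x + c₂ + -c₁ = x + r := by
      rw [hc₁, hc₂, hrdef, succ_nsmul]
      abel
    rwa [this] at key
  -- the singleton {0}
  set A0 : NonemptyCompacts (AddCircle (1 : ℝ)) := ⟨⟨{0}, isCompact_singleton⟩, Set.singleton_nonempty 0⟩ with hA0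
  intro hdense
  have hmem : A0 ∈ closure {A : NonemptyCompacts (AddCircle (1 : ℝ)) | ∃ n : ℕ, 1 ≤ n ∧ Fbar^[n] A = A} :=
    hdense A0
  obtain ⟨B, hB, hdist⟩ := Metric.mem_closure_iff.mp hmem (δ / 2) (by linarith)
  obtain ⟨x₀, hx₀⟩ := B.nonempty
  have hx₁ : x₀ + r ∈ (B : Set (AddCircle (1 : ℝ))) := inv B hB x₀ hx₀
  have htri : δ ≤ dist x₀ 0 + dist 0 (x₀ + r) := by
    have h1 : δ = dist x₀ (x₀ + r) := by
      rw [hδdef]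
      have : dist x₀ (x₀ + r) = dist (x₀ + 0) (x₀ + r) := by rw [add_zero]
      rw [this, dist_add_left]
    rw [h1]
    exact dist_triangle _ _ _
  have hfar : ∃ w ∈ (B : Set (AddCircle (1 : ℝ))), δ / 2 ≤ dist w 0 := by
    by_cases h : δ / 2 ≤ dist x₀ 0
    · exact ⟨x₀, hx₀, h⟩
    · refine ⟨x₀ + r, hx₁, ?_⟩
      rw [dist_comm]
      linarith
  obtain ⟨w, hw, hwfar⟩ := hfar
  have hedist : EMetric.hausdorffEdist (B : Set (AddCircle (1 : ℝ))) ({0} : Set (AddCircle (1 : ℝ))) ≠ ⊤ :=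
    Metric.hausdorffEdist_ne_top_of_nonempty_of_bounded B.nonempty (Set.singleton_nonempty 0)
      B.isCompact.isBounded (Bornology.isBounded_singleton)
  have hlow : δ / 2 ≤ Metric.hausdorffDist (B : Set (AddCircle (1 : ℝ))) ({0} : Set (AddCircle (1 : ℝ))) := by
    have h1 := Metric.infDist_le_hausdorffDist_of_mem hw hedist
    rw [Metric.infDist_singleton] at h1
    linarith
  have hAB : dist A0 B = Metric.hausdorffDist ((A0 : Set (AddCircle (1 : ℝ)))) (B : Set (AddCircle (1 : ℝ))) :=
    NonemptyCompacts.dist_eq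
  rw [hAB] at hdist
  have hsym : Metric.hausdorffDist ((A0 : Set (AddCircle (1 : ℝ)))) (B : Set (AddCircle (1 : ℝ)))
      = Metric.hausdorffDist (B : Set (AddCircle (1 : ℝ))) ({0} : Set (AddCircle (1 : ℝ))) := by
    rw [Metric.hausdorffDist_comm]; rfl
  rw [hsym] at hdist
  linarith
end

section
/- Let X = ℝ/ℤ be the circle with its quotient metric, let α, β ∈ ℝ be irrational with α − β ∉ ℤ, and let F = {R_α, R_β} where R_a(x) = x + a is the rotation by a. Then each of R_α and R_β is topologically transitive on X, but F is not super-transitive, and the induced map F̄ on the hyperspace K(X) of nonempty compact subsets of X with the Hausdorff metric d_H is not topologically transitive. -/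
open Set Filter Metric TopologicalSpace

/- ### Auxiliary lemmas -/

lemma aux_rot_iterate (c : AddCircle (1 : ℝ)) (n : ℕ) (x : AddCircle (1 : ℝ)) :
    (fun y => y + c)^[n] x = x + n • c := by
  induction n with
  | zero => simp
  | succ m ih => rw [Function.iterate_succ_apply', ih, succ_nsmul, add_assoc]

/-- Dense ℤ-orbit of an irrational rotation. -/
lemma aux_dense_zsmul (γ : ℝ) (hγ : Irrational γ) :
    Dense (Set.range fun k : ℤ => k • (γ : AddCircle (1 : ℝ))) := by
  set S : AddSubgroup ℝ := AddSubgroup.closure ({1, γ} : Set ℝ) with hS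
  have hdense : Dense (S : Set ℝ) := by
    rcases S.dense_or_cyclic with h | ⟨g, hg⟩
    · exact h
    · exfalso
      have h1 : (1 : ℝ) ∈ S := AddSubgroup.subset_closure (by simp)
      have hγS : γ ∈ S := AddSubgroup.subset_closure (by simp)
      rw [hg, AddSubgroup.mem_closure_singleton] at h1 hγS
      obtain ⟨m, hm⟩ := h1
      obtain ⟨n, hn⟩ := hγS
      rw [zsmul_eq_mul] at hm hn
      have hm0 : (m : ℝ) ≠ 0 := by
        intro h; rw [h, zero_mul] at hm; exact one_ne_zero hm.symm
      refine hγ ⟨(n : ℚ) / (m : ℚ), ?_⟩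
      push_cast
      rw [div_eq_iff hm0]
      linear_combination (m : ℝ) * hn - (n : ℝ) * hm
  -- push to the circle
  have hcont : Continuous ((↑) : ℝ → AddCircle (1 : ℝ)) := continuous_quotient_mk'
  have hsurj : Function.Surjective ((↑) : ℝ → AddCircle (1 : ℝ)) :=
    Quotient.mk''_surjective
  have himg : Dense (((↑) : ℝ → AddCircle (1 : ℝ)) '' (S : Set ℝ)) :=
    hsurj.denseRange.dense_image hcont hdense
  have hsub : (((↑) : ℝ → AddCircle (1 : ℝ)) '' (S : Set ℝ)) ⊆
      Set.range fun k : ℤ => k • (γ : AddCircle (1 : ℝ)) := by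
    rintro _ ⟨x, hx, rfl⟩
    have : (x : AddCircle (1 : ℝ)) ∈
        AddSubgroup.zmultiples ((γ : AddCircle (1 : ℝ))) := by
      have hle : S ≤ (AddSubgroup.zmultiples ((γ : AddCircle (1 : ℝ)))).comap
          (QuotientAddGroup.mk' (AddSubgroup.zmultiples (1 : ℝ))) := by
        rw [hS, AddSubgroup.closure_le]
        rintro y (rfl | rfl) <;>
          simp only [SetLike.mem_coe, AddSubgroup.mem_comap, QuotientAddGroup.mk'_apply]
        · have h10 : ((1 : ℝ) : AddCircle (1 : ℝ)) = 0 := by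
            rw [QuotientAddGroup.eq_zero_iff]
            exact ⟨1, one_zsmul 1⟩
          rw [h10]; exact zero_mem _
        · exact AddSubgroup.mem_zmultiples _
      exact hle hx
    obtain ⟨k, hk⟩ := this
    exact ⟨k, hk⟩
  exact himg.mono hsub

/-- Recurrence: arbitrarily large `n` with `n • c` arbitrarily close to `0`. -/
lemma aux_recur (c : AddCircle (1 : ℝ)) (ε : ℝ) (hε : 0 < ε) (N : ℕ) :
    ∃ n : ℕ, N ≤ n ∧ ‖(n : ℤ) • c‖ < ε := by
  haveI : Fact ((0 : ℝ) < 1) := ⟨one_pos⟩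
  obtain ⟨L, -, φ, hφ, hlim⟩ :=
    isCompact_univ.tendsto_subseq (x := fun j : ℕ => (j : ℤ) • c) (fun j => mem_univ _)
  obtain ⟨l₀, hl₀⟩ := Metric.tendsto_atTop.mp hlim (ε / 2) (half_pos hε)
  have hmono : ∀ k : ℕ, φ l₀ + k ≤ φ (l₀ + k) := by
    intro k
    induction k with
    | zero => simp
    | succ m ih =>
      have : φ (l₀ + m) < φ (l₀ + (m + 1)) := hφ (by omega)
      omega
  refine ⟨φ (l₀ + N) - φ l₀, by have := hmono N; omega, ?_⟩
  have h1 := hl₀ l₀ le_rfl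
  have h2 := hl₀ (l₀ + N) (Nat.le_add_right _ _)
  have hle : φ l₀ ≤ φ (l₀ + N) := le_trans (Nat.le_add_right _ _) (hmono N)
  have heq : ((φ (l₀ + N) - φ l₀ : ℕ) : ℤ) • c
      = (φ (l₀ + N) : ℤ) • c - (φ l₀ : ℤ) • c := by
    rw [show ((φ (l₀ + N) - φ l₀ : ℕ) : ℤ) = (φ (l₀ + N) : ℤ) - (φ l₀ : ℤ) by omega, sub_zsmul]
    abel
  rw [heq, ← dist_eq_norm]
  calc dist ((φ (l₀ + N) : ℤ) • c) ((φ l₀ : ℤ) • c)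
      ≤ dist ((φ (l₀ + N) : ℤ) • c) L + dist ((φ l₀ : ℤ) • c) L := dist_triangle_right _ _ _
    _ < ε / 2 + ε / 2 := add_lt_add h2 h1
    _ = ε := add_halves ε

/-- An irrational rotation of the circle is topologically transitive. -/
lemma aux_rot_trans (γ : ℝ) (hγ : Irrational γ) :
    TopTransitive (fun x : AddCircle (1 : ℝ) => x + (γ : AddCircle (1 : ℝ))) := by
  intro U V hU hV hUne hVne
  obtain ⟨u, hu⟩ := hUne
  set c : AddCircle (1 : ℝ) := (γ : AddCircle (1 : ℝ)) with hc
  have hbase := aux_dense_zsmul γ hγ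
  have htrans : Dense (Set.range fun k : ℤ => u + k • c) := by
    have himage : (Set.range fun k : ℤ => u + k • c)
        = (Homeomorph.addLeft u) '' (Set.range fun k : ℤ => k • c) := by
      rw [← Set.range_comp]; rfl
    rw [himage]
    exact (Homeomorph.addLeft u).surjective.denseRange.dense_image
      (Homeomorph.addLeft u).continuous hbase
  obtain ⟨y, ⟨k, rfl⟩, hyV⟩ := htrans.exists_mem_open hV hVne
  obtain ⟨ε, hε, hball⟩ := Metric.isOpen_iff.mp hV _ hyV
  obtain ⟨n, hnN, hsmall⟩ := aux_recur c ε hε (k.natAbs + 1)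
  set m : ℤ := k + n with hm
  have hm1 : 1 ≤ m := by
    have : (k.natAbs : ℤ) + 1 ≤ (n : ℤ) := by exact_mod_cast hnN
    omega
  refine ⟨m.toNat, by omega, ⟨u + m • c, ⟨u, hu, ?_⟩, hball ?_⟩⟩
  · rw [aux_rot_iterate c m.toNat u, ← natCast_zsmul]
    congr 1
    rw [Int.toNat_of_nonneg (by omega)]
  · rw [mem_ball, dist_eq_norm]
    have : u + m • c - (u + k • c) = (n : ℤ) • c := by
      rw [hm, add_zsmul]; abel
    rw [this]
    exact hsmall

/-- On the circle `X = ℝ/ℤ`, for irrational rotations `R_α, R_β` with `α - β ∉ ℤ` and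
`F = {R_α, R_β}`: each of `R_α` and `R_β` is topologically transitive, but `F` is not
super-transitive, and the induced map `F̄` on the hyperspace `K(X)` of nonempty compact
subsets of `X` with the Hausdorff metric is not topologically transitive. -/
theorem stmt_13 (α β : ℝ) (hα : Irrational α) (hβ : Irrational β)
    (hd : ∀ k : ℤ, α - β ≠ (k : ℝ))
    (F : Set (AddCircle (1 : ℝ) → AddCircle (1 : ℝ)))
    (hF : F = {fun x => x + (α : AddCircle (1 : ℝ)),
               fun x => x + (β : AddCircle (1 : ℝ))})
    (Fbar : NonemptyCompacts (AddCircle (1 : ℝ)) → NonemptyCompacts (AddCircle (1 : ℝ)))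
    (hFbar : ∀ A : NonemptyCompacts (AddCircle (1 : ℝ)),
      (Fbar A : Set (AddCircle (1 : ℝ))) = relImage F (A : Set (AddCircle (1 : ℝ)))) :
    TopTransitive (fun x : AddCircle (1 : ℝ) => x + (α : AddCircle (1 : ℝ))) ∧
    TopTransitive (fun x : AddCircle (1 : ℝ) => x + (β : AddCircle (1 : ℝ))) ∧
    ¬ SuperTransitive F ∧
    ¬ TopTransitive Fbar := by
  haveI : Fact ((0 : ℝ) < 1) := ⟨one_pos⟩
  set a : AddCircle (1 : ℝ) := (α : AddCircle (1 : ℝ)) with ha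
  set b : AddCircle (1 : ℝ) := (β : AddCircle (1 : ℝ)) with hb
  have hab : a ≠ b := by
    intro h
    rw [ha, hb, QuotientAddGroup.eq_iff_sub_mem] at h
    obtain ⟨k, hk⟩ := h
    simp only [zsmul_eq_mul, mul_one] at hk
    exact hd k hk.symm
  set δ : AddCircle (1 : ℝ) := a - b with hδdef
  have hδ : δ ≠ 0 := sub_ne_zero.mpr hab
  set ε : ℝ := ‖δ‖ with hεdef
  have hε : 0 < ε := norm_pos_iff.mpr hδ
  -- the key structural fact about relImage
  have hrel : ∀ (A : Set (AddCircle (1 : ℝ))) (y : AddCircle (1 : ℝ)), y ∈ A →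
      y + a ∈ relImage F A ∧ y + b ∈ relImage F A := by
    intro A y hy
    have : relImage F A = ((fun x => x + a) '' A) ∪ ((fun x => x + b) '' A) := by
      rw [relImage, hF, Set.biUnion_pair]
    rw [this]
    exact ⟨Or.inl ⟨y, hy, rfl⟩, Or.inr ⟨y, hy, rfl⟩⟩
  refine ⟨aux_rot_trans α hα, aux_rot_trans β hβ, ?_, ?_⟩
  · -- not super-transitive
    intro hS
    obtain ⟨x, -, n, hn1, hsub⟩ := hS univ (ball 0 (ε / 3)) isOpen_univ isOpen_ball
      univ_nonempty (nonempty_ball.mpr (by positivity))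
    obtain ⟨m, rfl⟩ := Nat.exists_eq_add_of_le hn1
    have claim1 : ∀ j : ℕ, x + j • a ∈ relIter F j x := by
      intro j
      induction j with
      | zero => simp [relIter]
      | succ i ih =>
        have : relIter F (i + 1) x = relImage F (relIter F i x) := by
          rw [relIter, relIter, Function.iterate_succ_apply']
        rw [this, succ_nsmul, ← add_assoc]
        exact (hrel _ _ ih).1
    have hstep : relIter F (1 + m) x = relImage F (relIter F m x) := by
      rw [relIter, relIter, add_comm 1 m, Function.iterate_succ_apply']
    have hp : (x + m • a) + a ∈ relIter F (1 + m) x := by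
      rw [hstep]; exact (hrel _ _ (claim1 m)).1
    have hq : (x + m • a) + b ∈ relIter F (1 + m) x := by
      rw [hstep]; exact (hrel _ _ (claim1 m)).2
    have h1 := mem_ball.mp (hsub hp)
    have h2 := mem_ball.mp (hsub hq)
    have hdist : dist ((x + m • a) + a) ((x + m • a) + b) = ε := by
      rw [dist_eq_norm, hεdef, hδdef]
      congr 1
      abel
    have := dist_triangle_right ((x + m • a) + a) ((x + m • a) + b) (0 : AddCircle (1 : ℝ))
    rw [hdist] at this
    linarith
  · -- Fbar not topologically transitive
    intro hT
    set pt0 : NonemptyCompacts (AddCircle (1 : ℝ)) :=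
      ⟨⟨{0}, isCompact_singleton⟩, Set.singleton_nonempty 0⟩ with hpt0
    obtain ⟨n, hn1, B, ⟨A, -, rfl⟩, hBV⟩ := hT univ (ball pt0 (ε / 3)) isOpen_univ isOpen_ball
      ⟨pt0, mem_univ _⟩ (nonempty_ball.mpr (by positivity))
    obtain ⟨m, rfl⟩ := Nat.exists_eq_add_of_le hn1
    set C : NonemptyCompacts (AddCircle (1 : ℝ)) := Fbar^[m] A with hC
    obtain ⟨c, hcC⟩ := C.nonempty
    have hiter : Fbar^[1 + m] A = Fbar C := by
      rw [hC, add_comm 1 m, Function.iterate_succ_apply']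
    have hpmem : c + a ∈ (Fbar^[1 + m] A : Set (AddCircle (1 : ℝ))) := by
      rw [hiter, hFbar]; exact (hrel _ _ hcC).1
    have hqmem : c + b ∈ (Fbar^[1 + m] A : Set (AddCircle (1 : ℝ))) := by
      rw [hiter, hFbar]; exact (hrel _ _ hcC).2
    have hdistB : dist (Fbar^[1 + m] A) pt0 < ε / 3 := mem_ball.mp hBV
    have hfin : EMetric.hausdorffEdist
        ((Fbar^[1 + m] A : Set (AddCircle (1 : ℝ)))) (pt0 : Set (AddCircle (1 : ℝ))) ≠ ⊤ :=
      Metric.hausdorffEdist_ne_top_of_nonempty_of_bounded (Fbar^[1 + m] A).nonempty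
        pt0.nonempty (Fbar^[1 + m] A).isCompact.isBounded pt0.isCompact.isBounded
    have key : ∀ y : AddCircle (1 : ℝ), y ∈ (Fbar^[1 + m] A : Set (AddCircle (1 : ℝ))) →
        dist y 0 < ε / 3 := by
      intro y hy
      calc dist y 0 = Metric.infDist y (pt0 : Set (AddCircle (1 : ℝ))) := by
            rw [show (pt0 : Set (AddCircle (1 : ℝ))) = {0} from rfl, Metric.infDist_singleton]
        _ ≤ Metric.hausdorffDist ((Fbar^[1 + m] A : Set (AddCircle (1 : ℝ))))
            (pt0 : Set (AddCircle (1 : ℝ))) :=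
            Metric.infDist_le_hausdorffDist_of_mem hy hfin
        _ = dist (Fbar^[1 + m] A) pt0 := rfl
        _ < ε / 3 := hdistB
    have h1 := key _ hpmem
    have h2 := key _ hqmem
    have hdist : dist (c + a) (c + b) = ε := by
      rw [dist_eq_norm, hεdef, hδdef]
      congr 1
      abel
    have := dist_triangle_right (c + a) (c + b) (0 : AddCircle (1 : ℝ))
    rw [hdist] at this
    linarith
end

section
/- Let Σ = {0,1}^ℤ be the space of bi-infinite binary sequences with the metric d(x,y) = Σ_{i∈ℤ} |x_i − y_i| / 2^{|i|}, let σ : Σ → Σ be the shift map (σx)_i = x_{i+1}, and let F = {σ, σ²}. Then the induced map F̄(A) = σ(A) ∪ σ²(A) on the hyperspace K(Σ) of nonempty compact subsets of Σ with the Hausdorff metric d_H is sensitive: there exists δ > 0 such that for every A ∈ K(Σ) and every ε > 0 there exist B ∈ K(Σ) with d_H(A,B) < ε and n ≥ 1 with d_H(F̄^n(A), F̄^n(B)) ≥ δ. -/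
open Set Filter Metric TopologicalSpace

def Sigma2 : Type := ℤ → Fin 2

def shiftMap : Sigma2 → Sigma2 := fun x i => x (i + 1)

lemma shift_iter_apply (k : ℕ) (x : Sigma2) (i : ℤ) :
    (shiftMap^[k] x) i = x (i + k) := by
  induction k generalizing x i with
  | zero => simp
  | succ k ih =>
    rw [Function.iterate_succ_apply, ih]
    show x (i + k + 1) = x (i + (k+1 : ℕ))
    congr 1
    push_cast
    ring

section aux
variable [m : MetricSpace Sigma2]

lemma fin2_abs_le (a b : Fin 2) : |((a : ℕ) : ℝ) - ((b : ℕ) : ℝ)| ≤ 1 := by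
  fin_cases a <;> fin_cases b <;> norm_num

lemma fin2_abs_eq_one {a b : Fin 2} (h : a ≠ b) : |((a : ℕ) : ℝ) - ((b : ℕ) : ℝ)| = 1 := by
  fin_cases a <;> fin_cases b <;> simp_all <;> norm_num

lemma summable_aux (x y : Sigma2) :
    Summable (fun i : ℤ => |((x i : ℕ) : ℝ) - ((y i : ℕ) : ℝ)| / 2 ^ i.natAbs) := by
  have hgeom : Summable (fun i : ℤ => (1 : ℝ) / 2 ^ i.natAbs) := by
    apply Summable.of_nat_of_neg <;>
    · simp only [Int.natAbs_natCast, Int.natAbs_neg]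
      exact summable_geometric_two.congr (fun n => by rw [div_pow, one_pow, one_div])
  refine hgeom.of_nonneg_of_le (fun i => by positivity) (fun i => ?_)
  apply div_le_div_of_nonneg_right (fin2_abs_le _ _)
  · positivity

lemma dist_ge_one (hd : ∀ x y : Sigma2,
      dist x y = ∑' i : ℤ, |((x i : ℕ) : ℝ) - ((y i : ℕ) : ℝ)| / 2 ^ i.natAbs)
    {x y : Sigma2} (h : x 0 ≠ y 0) : (1 : ℝ) ≤ dist x y := by
  rw [hd]
  have h0 : |((x 0 : ℕ) : ℝ) - ((y 0 : ℕ) : ℝ)| / 2 ^ (0 : ℤ).natAbs = 1 := by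
    rw [fin2_abs_eq_one h]; norm_num
  calc (1:ℝ) = |((x 0 : ℕ) : ℝ) - ((y 0 : ℕ) : ℝ)| / 2 ^ (0 : ℤ).natAbs := h0.symm
    _ ≤ _ := Summable.le_tsum (summable_aux x y) 0 (fun i _ => by positivity)

end aux

section aux2
variable [m : MetricSpace Sigma2]

lemma dist_le_block (hd : ∀ x y : Sigma2,
      dist x y = ∑' i : ℤ, |((x i : ℕ) : ℝ) - ((y i : ℕ) : ℝ)| / 2 ^ i.natAbs)
    (n : ℕ) {x y : Sigma2}
    (h : ∀ i : ℤ, ¬((n:ℤ) ≤ i ∧ i ≤ 2*(n:ℤ)) → x i = y i) :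
    dist x y ≤ ((n:ℝ)+1)/2^n := by
  rw [hd]
  have hz : ∀ i ∉ Finset.Icc (n:ℤ) (2*(n:ℤ)),
      |((x i : ℕ):ℝ) - ((y i:ℕ):ℝ)| / 2 ^ i.natAbs = 0 := by
    intro i hi
    rw [Finset.mem_Icc] at hi
    rw [h i hi]
    simp
  rw [tsum_eq_sum hz]
  have hcard : (Finset.Icc (n:ℤ) (2*(n:ℤ))).card = n+1 := by
    rw [Int.card_Icc]
    omega
  have hterm : ∀ i ∈ Finset.Icc (n:ℤ) (2*(n:ℤ)),
      |((x i : ℕ):ℝ) - ((y i:ℕ):ℝ)| / 2 ^ i.natAbs ≤ (1:ℝ)/2^n := by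
    intro i hi
    rw [Finset.mem_Icc] at hi
    have hn : n ≤ i.natAbs := by omega
    exact div_le_div₀ (by norm_num) (fin2_abs_le _ _) (by positivity)
      (pow_le_pow_right₀ (by norm_num) hn)
  calc ∑ i ∈ Finset.Icc (n:ℤ) (2*(n:ℤ)), |((x i : ℕ):ℝ) - ((y i:ℕ):ℝ)| / 2 ^ i.natAbs
      ≤ (Finset.Icc (n:ℤ) (2*(n:ℤ))).card • ((1:ℝ)/2^n) :=
        Finset.sum_le_card_nsmul _ _ _ hterm
    _ = ((n:ℝ)+1)/2^n := by
        rw [hcard, nsmul_eq_mul]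
        push_cast
        ring

lemma mem_iter (Fbar : NonemptyCompacts Sigma2 → NonemptyCompacts Sigma2)
    (hFbar : ∀ A : NonemptyCompacts Sigma2,
      (Fbar A : Set Sigma2) =
        shiftMap '' (A : Set Sigma2) ∪ (shiftMap ∘ shiftMap) '' (A : Set Sigma2))
    (n : ℕ) (A : NonemptyCompacts Sigma2) {y : Sigma2} (hy : y ∈ (A : Set Sigma2))
    {k : ℕ} (h1 : n ≤ k) (h2 : k ≤ 2*n) :
    shiftMap^[k] y ∈ (Fbar^[n] A : Set Sigma2) := by
  induction n generalizing A y k with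
  | zero =>
    obtain rfl : k = 0 := by omega
    simpa using hy
  | succ n ih =>
    rw [Function.iterate_succ_apply]
    by_cases hk : k ≤ 2*n + 1
    · obtain ⟨j, rfl⟩ : ∃ j, k = j + 1 := ⟨k - 1, by omega⟩
      rw [Function.iterate_succ_apply]
      exact ih (Fbar A) (by rw [hFbar]; exact Or.inl ⟨y, hy, rfl⟩) (by omega) (by omega)
    · obtain ⟨j, rfl⟩ : ∃ j, k = j + 2 := ⟨k - 2, by omega⟩
      have hrw : shiftMap^[j+2] y = shiftMap^[j] ((shiftMap ∘ shiftMap) y) := by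
        rw [Function.iterate_succ_apply, Function.iterate_succ_apply]; rfl
      rw [hrw]
      exact ih (Fbar A) (by rw [hFbar]; exact Or.inr ⟨y, hy, rfl⟩) (by omega) (by omega)

lemma cover_iter (Fbar : NonemptyCompacts Sigma2 → NonemptyCompacts Sigma2)
    (hFbar : ∀ A : NonemptyCompacts Sigma2,
      (Fbar A : Set Sigma2) =
        shiftMap '' (A : Set Sigma2) ∪ (shiftMap ∘ shiftMap) '' (A : Set Sigma2))
    (n : ℕ) (A : NonemptyCompacts Sigma2) {z : Sigma2}
    (hz : z ∈ (Fbar^[n] A : Set Sigma2)) :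
    ∃ y ∈ (A : Set Sigma2), ∃ k : ℕ, n ≤ k ∧ k ≤ 2*n ∧ z = shiftMap^[k] y := by
  induction n generalizing A with
  | zero => exact ⟨z, by simpa using hz, 0, le_refl _, by omega, rfl⟩
  | succ n ih =>
    rw [Function.iterate_succ_apply] at hz
    obtain ⟨y', hy', k', hk1, hk2, rfl⟩ := ih (Fbar A) hz
    rw [hFbar] at hy'
    rcases hy' with ⟨w, hw, rfl⟩ | ⟨w, hw, rfl⟩
    · refine ⟨w, hw, k'+1, by omega, by omega, ?_⟩
      rw [Function.iterate_succ_apply]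
    · refine ⟨w, hw, k'+2, by omega, by omega, ?_⟩
      rw [Function.iterate_succ_apply, Function.iterate_succ_apply]
      rfl

end aux2

/-- Let `Σ = {0,1}^ℤ` carry the metric `d(x,y) = Σ_{i ∈ ℤ} |x_i − y_i| / 2^{|i|}` and let
`F = {σ, σ²}`. Then the induced map `F̄(A) = σ(A) ∪ σ²(A)` on the hyperspace `K(Σ)` of
nonempty compact subsets of `Σ` with the Hausdorff metric is sensitive: there is `δ > 0`
such that for every `A ∈ K(Σ)` and every `ε > 0` there are `B ∈ K(Σ)` with `d_H(A,B) < ε`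
and `n ≥ 1` with `d_H(F̄^n(A), F̄^n(B)) ≥ δ`. -/
theorem stmt_14 [m : MetricSpace Sigma2]
    (hd : ∀ x y : Sigma2,
      dist x y = ∑' i : ℤ, |((x i : ℕ) : ℝ) - ((y i : ℕ) : ℝ)| / 2 ^ i.natAbs)
    (Fbar : NonemptyCompacts Sigma2 → NonemptyCompacts Sigma2)
    (hFbar : ∀ A : NonemptyCompacts Sigma2,
      (Fbar A : Set Sigma2) =
        shiftMap '' (A : Set Sigma2) ∪ (shiftMap ∘ shiftMap) '' (A : Set Sigma2)) :
    ∃ δ > 0, ∀ A : NonemptyCompacts Sigma2, ∀ ε > 0,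
      ∃ B : NonemptyCompacts Sigma2, dist A B < ε ∧
        ∃ n : ℕ, 1 ≤ n ∧ δ ≤ dist (Fbar^[n] A) (Fbar^[n] B) := by
  classical
  refine ⟨1, one_pos, fun A ε hε => ?_⟩
  -- choose n with 1 ≤ n and (n+1)/2^n < ε
  have htend : Tendsto (fun n : ℕ => ((n:ℝ)+1) * (1/2)^n) atTop (nhds 0) := by
    have t1 : Tendsto (fun n : ℕ => (n:ℝ) * (1/2)^n) atTop (nhds 0) := by
      have := (summable_pow_mul_geometric_of_norm_lt_one 1
        (r := (1/2:ℝ)) (by norm_num)).tendsto_atTop_zero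
      simpa [pow_one] using this
    have t2 : Tendsto (fun n : ℕ => ((1:ℝ)/2)^n) atTop (nhds 0) :=
      tendsto_pow_atTop_nhds_zero_of_lt_one (by norm_num) (by norm_num)
    have := t1.add t2
    simpa [add_mul] using this
  have hev : ∀ᶠ n : ℕ in atTop, ((n:ℝ)+1) * (1/2)^n < ε :=
    htend.eventually (gt_mem_nhds hε)
  obtain ⟨n, hn1, hnε'⟩ := (hev.and (eventually_ge_atTop 1)).exists
  have hnε : ((n:ℝ)+1)/2^n < ε := by
    have : ((n:ℝ)+1)/2^n = ((n:ℝ)+1) * (1/2)^n := by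
      rw [div_pow, one_pow, div_eq_mul_inv, one_div, inv_eq_one_div]
    rw [this]; exact hn1
  -- choose the value c written in the block
  -- the block-rewriting map
  set g : Fin 2 → Sigma2 → Sigma2 :=
    fun c x i => if (n:ℤ) ≤ i ∧ i ≤ 2*(n:ℤ) then c else x i with hg
  have hgin : ∀ (c : Fin 2) (x : Sigma2) (k : ℕ), n ≤ k → k ≤ 2*n → g c x (k:ℤ) = c := by
    intro c x k h1 h2
    have hb : (n:ℤ) ≤ (k:ℤ) ∧ (k:ℤ) ≤ 2*(n:ℤ) := by push_cast; omega
    simp only [hg]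
    rw [if_pos hb]
  have hgoff : ∀ (c : Fin 2) (x : Sigma2) (i : ℤ),
      ¬((n:ℤ) ≤ i ∧ i ≤ 2*(n:ℤ)) → g c x i = x i := by
    intro c x i hi
    simp only [hg]
    rw [if_neg hi]
  have hgblock : ∀ (c : Fin 2) (x : Sigma2) (i : ℤ),
      ((n:ℤ) ≤ i ∧ i ≤ 2*(n:ℤ)) → g c x i = c := by
    intro c x i hi
    simp only [hg]
    rw [if_pos hi]
  have hlip : ∀ c : Fin 2, LipschitzWith 1 (g c) := by
    intro c
    apply LipschitzWith.of_dist_le_mul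
    intro x y
    rw [NNReal.coe_one, one_mul, hd, hd]
    refine Summable.tsum_le_tsum (fun i => ?_) (summable_aux _ _) (summable_aux _ _)
    by_cases hb : (n:ℤ) ≤ i ∧ i ≤ 2*(n:ℤ)
    · rw [hgblock c x i hb, hgblock c y i hb, sub_self, abs_zero, zero_div]
      positivity
    · rw [hgoff c x i hb, hgoff c y i hb]
  have hr0 : (0:ℝ) ≤ ((n:ℝ)+1)/2^n := by positivity
  -- the perturbed compact set
  set B : Fin 2 → NonemptyCompacts Sigma2 := fun c =>
    ⟨⟨g c '' (A : Set Sigma2), A.isCompact.image (hlip c).continuous⟩,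
      A.nonempty.image (g c)⟩ with hB
  have hBset : ∀ c, (B c : Set Sigma2) = g c '' (A : Set Sigma2) := fun c => rfl
  have hdAB : ∀ c, dist A (B c) < ε := by
    intro c
    rw [NonemptyCompacts.dist_eq]
    refine lt_of_le_of_lt (hausdorffDist_le_of_mem_dist hr0 ?_ ?_) hnε
    · intro x hx
      exact ⟨g c x, ⟨x, hx, rfl⟩,
        dist_le_block hd n (fun i hi => (hgoff c x i hi).symm)⟩
    · rintro y ⟨x, hx, rfl⟩
      refine ⟨x, hx, ?_⟩
      rw [dist_comm]
      exact dist_le_block hd n (fun i hi => (hgoff c x i hi).symm)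
  have hBcoord : ∀ c, ∀ z ∈ (Fbar^[n] (B c) : Set Sigma2), z 0 = c := by
    intro c z hz
    obtain ⟨y, hy, k, hk1, hk2, rfl⟩ := cover_iter Fbar hFbar n (B c) hz
    rw [hBset] at hy
    obtain ⟨x, hx, rfl⟩ := hy
    rw [shift_iter_apply, zero_add]
    exact hgin c x k hk1 hk2
  have hfin : ∀ X Y : NonemptyCompacts Sigma2,
      EMetric.hausdorffEdist (X : Set Sigma2) (Y : Set Sigma2) ≠ ⊤ :=
    fun X Y => hausdorffEdist_ne_top_of_nonempty_of_bounded X.nonempty Y.nonempty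
      X.isCompact.isBounded Y.isCompact.isBounded
  have hinf : ∀ (p : Sigma2) (X : NonemptyCompacts Sigma2),
      (∀ z ∈ (X : Set Sigma2), p 0 ≠ z 0) → (1:ℝ) ≤ infDist p (X : Set Sigma2) := by
    intro p X hX
    by_contra hlt
    push_neg at hlt
    obtain ⟨q, hq, hqd⟩ := (infDist_lt_iff X.nonempty).1 hlt
    exact absurd hqd (not_lt.2 (dist_ge_one hd (hX q hq)))
  by_cases hC : ∃ a ∈ (A : Set Sigma2), ∃ k : ℕ, n ≤ k ∧ k ≤ 2*n ∧ a (k:ℤ) = 1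
  · -- write zeros in the block
    obtain ⟨a, ha, k, hk1, hk2, hak⟩ := hC
    refine ⟨B 0, hdAB 0, n, hnε', ?_⟩
    have hp : shiftMap^[k] a ∈ (Fbar^[n] A : Set Sigma2) := mem_iter Fbar hFbar n A ha hk1 hk2
    have hpc : (shiftMap^[k] a) 0 = 1 := by rw [shift_iter_apply, zero_add]; exact hak
    have h1 : (1:ℝ) ≤ infDist (shiftMap^[k] a) ((Fbar^[n] (B 0) : Set Sigma2)) := by
      refine hinf _ _ (fun z hz => ?_)
      rw [hpc, hBcoord 0 z hz]
      decide
    calc (1:ℝ) ≤ infDist (shiftMap^[k] a) ((Fbar^[n] (B 0) : Set Sigma2)) := h1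
      _ ≤ hausdorffDist ((Fbar^[n] A : Set Sigma2)) ((Fbar^[n] (B 0) : Set Sigma2)) :=
          infDist_le_hausdorffDist_of_mem hp (hfin _ _)
      _ = dist (Fbar^[n] A) (Fbar^[n] (B 0)) := (NonemptyCompacts.dist_eq).symm
  · -- all block coordinates of all points of A are zero: write ones
    push_neg at hC
    have hA0 : ∀ a ∈ (A : Set Sigma2), ∀ k : ℕ, n ≤ k → k ≤ 2*n → a (k:ℤ) = 0 := by
      intro a ha k h1 h2
      have := hC a ha k h1 h2
      omega
    obtain ⟨a, ha⟩ := A.nonempty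
    refine ⟨B 1, hdAB 1, n, hnε', ?_⟩
    have hgaB : g 1 a ∈ (B 1 : Set Sigma2) := ⟨a, ha, rfl⟩
    have hp : shiftMap^[n] (g 1 a) ∈ (Fbar^[n] (B 1) : Set Sigma2) :=
      mem_iter Fbar hFbar n (B 1) hgaB (le_refl n) (by omega)
    have hpc : (shiftMap^[n] (g 1 a)) 0 = 1 := by
      rw [shift_iter_apply, zero_add]
      exact hgin 1 a n (le_refl n) (by omega)
    have h1 : (1:ℝ) ≤ infDist (shiftMap^[n] (g 1 a)) ((Fbar^[n] A : Set Sigma2)) := by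
      refine hinf _ _ (fun z hz => ?_)
      obtain ⟨y, hy, k, hk1, hk2, rfl⟩ := cover_iter Fbar hFbar n A hz
      rw [hpc, shift_iter_apply, zero_add, hA0 y hy k hk1 hk2]
      decide
    calc (1:ℝ) ≤ infDist (shiftMap^[n] (g 1 a)) ((Fbar^[n] A : Set Sigma2)) := h1
      _ ≤ hausdorffDist ((Fbar^[n] (B 1) : Set Sigma2)) ((Fbar^[n] A : Set Sigma2)) :=
          infDist_le_hausdorffDist_of_mem hp (hfin _ _)
      _ = dist (Fbar^[n] A) (Fbar^[n] (B 1)) := by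
          rw [NonemptyCompacts.dist_eq, hausdorffDist_comm]
end
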